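/- arXiv:2605.03911 — 6 statements merged into one kernel-verified Lean document; each statement's English description precedes it below -/
import Mathlib

section
/- Under Assumptions A2–A5 and consistency, the contrast φ(x) = e_{11}(x) − e_{10}(x) identifies the stable direct effect of the quasi-instrument: for every x∈𝒳, φ(x) = β_Z(x), and moreover β_Z(x) = E[Y^{a,1} − Y^{a,0} | X=x] for each a∈{0,1} (the controlled direct effect of Z on Y). -/
open MeasureTheory

/-- The probability of an event, as a real number. -/
noncomputable def prb {Ω : Type*} [MeasurableSpace Ω] (P : Measure Ω) (s : Set Ω) : ℝ :=
  (P s).toReal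

/-- Conditional probability `P(s | t)` as a real number. -/
noncomputable def cprb {Ω : Type*} [MeasurableSpace Ω] (P : Measure Ω) (s t : Set Ω) : ℝ :=
  prb P (s ∩ t) / prb P t

/-- Conditional expectation `E[Y | t]` as a real number. -/
noncomputable def cex {Ω : Type*} [MeasurableSpace Ω] (P : Measure Ω) (Y : Ω → ℝ)
    (t : Set Ω) : ℝ :=
  (∫ ω in t, Y ω ∂P) / prb P t

lemma key_dist {Ω : Type*} [MeasurableSpace Ω] (P : Measure Ω) [IsProbabilityMeasure P]
    (f : Ω → ℝ) (hf : Measurable f)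
    (S₁ S₂ : Set Ω) (hS₁ : MeasurableSet S₁) (hS₂ : MeasurableSet S₂)
    (c₁ c₂ : ENNReal) (hc₁ : c₁ ≠ ⊤) (hc₂ : c₂ ≠ ⊤)
    (h : ∀ B : Set ℝ, MeasurableSet B → c₁ * P (f ⁻¹' B ∩ S₁) = c₂ * P (f ⁻¹' B ∩ S₂)) :
    c₁.toReal * ∫ ω in S₁, f ω ∂P = c₂.toReal * ∫ ω in S₂, f ω ∂P := by
  have hμ : (c₁ • ((P.restrict S₁).map f)) = (c₂ • ((P.restrict S₂).map f)) := by
    ext B hB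
    simp only [Measure.smul_apply, smul_eq_mul, Measure.map_apply hf hB,
      Measure.restrict_apply (hf hB)]
    exact h B hB
  have h₁ : ∫ x, x ∂(c₁ • ((P.restrict S₁).map f)) = c₁.toReal * ∫ ω in S₁, f ω ∂P := by
    rw [integral_smul_measure, smul_eq_mul]
    congr 1
    exact integral_map hf.aemeasurable aestronglyMeasurable_id
  have h₂ : ∫ x, x ∂(c₂ • ((P.restrict S₂).map f)) = c₂.toReal * ∫ ω in S₂, f ω ∂P := by
    rw [integral_smul_measure, smul_eq_mul]
    congr 1
    exact integral_map hf.aemeasurable aestronglyMeasurable_id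
  rw [← h₁, ← h₂, hμ]

lemma toReal_mul_eqENN {a b c d : ENNReal} (ha : a ≠ ⊤) (hb : b ≠ ⊤) (hc : c ≠ ⊤) (hd : d ≠ ⊤)
    (h : a.toReal * b.toReal = c.toReal * d.toReal) : a * b = c * d := by
  rw [← ENNReal.toReal_mul, ← ENNReal.toReal_mul] at h
  exact (ENNReal.toReal_eq_toReal_iff' (ENNReal.mul_ne_top ha hb) (ENNReal.mul_ne_top hc hd)).1 h

lemma integral_split {Ω ι : Type*} [MeasurableSpace Ω] [Fintype ι] [MeasurableSpace ι]
    [MeasurableSingletonClass ι] (P : Measure Ω) [IsProbabilityMeasure P]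
    (g : Ω → ι) (hg : Measurable g) (S : Set Ω) (hS : MeasurableSet S)
    (f : Ω → ℝ) (hf : Integrable f P) :
    ∫ ω in S, f ω ∂P = ∑ i, ∫ ω in {ω | g ω = i} ∩ S, f ω ∂P := by
  have hU : S = ⋃ i ∈ Finset.univ, ({ω | g ω = i} ∩ S) := by
    ext ω; simp
  conv_lhs => rw [hU]
  rw [integral_biUnion_finset]
  · exact fun i _ => (hg (measurableSet_singleton i)).inter hS
  · intro i _ j _ hij
    simp only [Function.onFun]
    exact Set.disjoint_left.2 fun ω h1 h2 => hij (h1.1.symm.trans h2.1)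
  · exact fun i _ => hf.integrableOn

lemma prb_split {Ω ι : Type*} [MeasurableSpace Ω] [Fintype ι] [MeasurableSpace ι]
    [MeasurableSingletonClass ι] (P : Measure Ω) [IsProbabilityMeasure P]
    (g : Ω → ι) (hg : Measurable g) (S : Set Ω) (hS : MeasurableSet S) :
    (P S).toReal = ∑ i, (P ({ω | g ω = i} ∩ S)).toReal := by
  have hU : S = ⋃ i ∈ Finset.univ, ({ω | g ω = i} ∩ S) := by
    ext ω; simp
  rw [show P S = ∑ i, P ({ω | g ω = i} ∩ S) by
    conv_lhs => rw [hU]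
    rw [measure_biUnion_finset]
    · intro i _ j _ hij
      simp only [Function.onFun]
      exact Set.disjoint_left.2 fun ω h1 h2 => hij (h1.1.symm.trans h2.1)
    · exact fun i _ => (hg (measurableSet_singleton i)).inter hS]
  exact ENNReal.toReal_sum fun i _ => measure_ne_top P _

/-- Under A2–A5 and consistency, `φ(x) = e₁₁(x) − e₁₀(x)` identifies the
stable direct effect: `φ(x) = β_Z(x)` and `β_Z(x) = E[Y^{a,1} − Y^{a,0} | X = x]`
for each `a ∈ {0,1}`. -/
theorem phi_identifies_stable_direct_effect
    {Ω 𝒰 𝒳 : Type*} [MeasurableSpace Ω]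
    [Fintype 𝒰] [MeasurableSpace 𝒰] [MeasurableSingletonClass 𝒰]
    [Fintype 𝒳] [MeasurableSpace 𝒳] [MeasurableSingletonClass 𝒳]
    (P : Measure Ω) [IsProbabilityMeasure P]
    (Y : Ω → ℝ) (A Z : Ω → Bool) (U : Ω → 𝒰) (X : Ω → 𝒳)
    -- potential outcomes Y^{a,z} and potential treatments A^z
    (Ypo : Bool → Bool → Ω → ℝ) (Apo : Bool → Ω → Bool)
    (hY : Measurable Y) (hA : Measurable A) (hZ : Measurable Z)
    (hU : Measurable U) (hX : Measurable X)
    (hYpo : ∀ a z, Measurable (Ypo a z)) (hApo : ∀ z, Measurable (Apo z))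
    (hYint : Integrable Y P) (hYpoint : ∀ a z, Integrable (Ypo a z) P)
    -- positivity
    (hUXpos : ∀ u x, 0 < prb P {ω | U ω = u ∧ X ω = x})
    (hZpos : ∀ u x,
      0 < cprb P {ω | Z ω = true} {ω | U ω = u ∧ X ω = x} ∧
        cprb P {ω | Z ω = true} {ω | U ω = u ∧ X ω = x} < 1)
    (hApos : ∀ z u x,
      0 < cprb P {ω | A ω = true} {ω | Z ω = z ∧ U ω = u ∧ X ω = x} ∧
        cprb P {ω | A ω = true} {ω | Z ω = z ∧ U ω = u ∧ X ω = x} < 1)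
    -- consistency
    (hconsY : ∀ᵐ ω ∂P, Y ω = Ypo (A ω) (Z ω) ω)
    (hconsA : ∀ᵐ ω ∂P, A ω = Apo (Z ω) ω)
    -- A2 (independence): Z ⫫ (U, A^0, A^1, (Y^{a,z})_{a,z}) | X
    (hA2 : ∀ (z : Bool) (x : 𝒳) (B : Set (𝒰 × (Bool → Bool) × (Bool → Bool → ℝ))),
      MeasurableSet B →
      prb P ({ω | Z ω = z} ∩ {ω | (U ω, fun z' => Apo z' ω, fun a z' => Ypo a z' ω) ∈ B}
          ∩ {ω | X ω = x}) * prb P {ω | X ω = x}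
        = prb P ({ω | Z ω = z} ∩ {ω | X ω = x})
          * prb P ({ω | (U ω, fun z' => Apo z' ω, fun a z' => Ypo a z' ω) ∈ B}
              ∩ {ω | X ω = x}))
    -- A3 (latent exchangeability): A^{z*} ⫫ Y^{a,z} | Z = z, U, X
    (hA3 : ∀ (a z zs t : Bool) (B : Set ℝ), MeasurableSet B → ∀ (u : 𝒰) (x : 𝒳),
      prb P ({ω | Apo zs ω = t} ∩ {ω | Ypo a z ω ∈ B} ∩ {ω | Z ω = z ∧ U ω = u ∧ X ω = x})
          * prb P {ω | Z ω = z ∧ U ω = u ∧ X ω = x}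
        = prb P ({ω | Apo zs ω = t} ∩ {ω | Z ω = z ∧ U ω = u ∧ X ω = x})
          * prb P ({ω | Ypo a z ω ∈ B} ∩ {ω | Z ω = z ∧ U ω = u ∧ X ω = x}))
    -- A4 (stable direct effect)
    (βZ : 𝒳 → ℝ)
    (hA4 : ∀ (a a' z : Bool) (u : 𝒰) (x : 𝒳),
      cex P (fun ω => Ypo a true ω - Ypo a false ω)
        {ω | A ω = a' ∧ Z ω = z ∧ U ω = u ∧ X ω = x} = βZ x)
    -- A5 (multiplicative treatment model)
    (α1 : Bool → 𝒳 → ℝ) (α2 : 𝒰 → 𝒳 → ℝ)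
    (hα1 : ∀ x, α1 false x = 0)
    (hA5 : ∀ z u x,
      cprb P {ω | A ω = true} {ω | Z ω = z ∧ U ω = u ∧ X ω = x}
        = Real.exp (α1 z x + α2 u x)) :
    ∀ x : 𝒳,
      (cex P Y {ω | A ω = true ∧ Z ω = true ∧ X ω = x}
          - cex P Y {ω | A ω = true ∧ Z ω = false ∧ X ω = x} = βZ x)
      ∧ (∀ a : Bool,
          βZ x = cex P (fun ω => Ypo a true ω - Ypo a false ω) {ω | X ω = x}) := by
  intro x
  -- Ω is nonempty
  have hΩ : Nonempty Ω := by
    by_contra h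
    have h1 : (P Set.univ) = 1 := measure_univ
    rw [not_nonempty_iff] at h
    rw [Set.univ_eq_empty_iff.2 h, measure_empty] at h1
    simp at h1
  obtain ⟨ω0⟩ := hΩ
  -- measurability of basic sets
  have mA : ∀ a : Bool, MeasurableSet {ω | A ω = a} := fun a => hA (measurableSet_singleton a)
  have mZ : ∀ z : Bool, MeasurableSet {ω | Z ω = z} := fun z => hZ (measurableSet_singleton z)
  have mU : ∀ u : 𝒰, MeasurableSet {ω | U ω = u} := fun u => hU (measurableSet_singleton u)
  have mX : MeasurableSet {ω | X ω = x} := hX (measurableSet_singleton x)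
  have mApo : ∀ z, MeasurableSet {ω | Apo z ω = true} :=
    fun z => hApo z (measurableSet_singleton true)
  have mSux : ∀ u, MeasurableSet {ω | U ω = u ∧ X ω = x} := fun u => (mU u).inter mX
  have mSzux : ∀ z u, MeasurableSet {ω | Z ω = z ∧ U ω = u ∧ X ω = x} :=
    fun z u => (mZ z).inter (mSux u)
  have mSazux : ∀ a z u, MeasurableSet {ω | A ω = a ∧ Z ω = z ∧ U ω = u ∧ X ω = x} :=
    fun a z u => (mA a).inter (mSzux z u)
  have mT : ∀ z u, MeasurableSet {ω | Apo z ω = true ∧ Z ω = z ∧ U ω = u ∧ X ω = x} :=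
    fun z u => (mApo z).inter (mSzux z u)
  have mSzx : ∀ z, MeasurableSet {ω | Z ω = z ∧ X ω = x} := fun z => (mZ z).inter mX
  have mSazx : ∀ a z, MeasurableSet {ω | A ω = a ∧ Z ω = z ∧ X ω = x} :=
    fun a z => (mA a).inter (mSzx z)
  -- prb basics
  have prbnn : ∀ s : Set Ω, 0 ≤ prb P s := fun s => ENNReal.toReal_nonneg
  have prbfin : ∀ s : Set Ω, P s ≠ ⊤ := fun s => measure_ne_top P s
  have prbmono : ∀ s t : Set Ω, s ⊆ t → prb P s ≤ prb P t :=
    fun s t h => ENNReal.toReal_mono (prbfin t) (measure_mono h)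
  -- positivity
  have hqpos : ∀ u, 0 < prb P {ω | U ω = u ∧ X ω = x} := fun u => hUXpos u x
  have hZt : ∀ u, 0 < prb P {ω | Z ω = true ∧ U ω = u ∧ X ω = x} := by
    intro u
    have h1 := (hZpos u x).1
    rw [cprb] at h1
    rcases div_pos_iff.1 h1 with ⟨h2, _⟩ | ⟨_, h3⟩
    · exact h2
    · linarith [hqpos u]
  have hsplitZ : ∀ u, prb P {ω | U ω = u ∧ X ω = x}
      = prb P {ω | Z ω = true ∧ U ω = u ∧ X ω = x}
        + prb P {ω | Z ω = false ∧ U ω = u ∧ X ω = x} := by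
    intro u
    have h := prb_split P Z hZ _ (mSux u)
    rw [Fintype.sum_bool] at h
    exact h
  have hZf : ∀ u, 0 < prb P {ω | Z ω = false ∧ U ω = u ∧ X ω = x} := by
    intro u
    have h1 := (hZpos u x).2
    rw [cprb] at h1
    have h2 : prb P ({ω | Z ω = true} ∩ {ω | U ω = u ∧ X ω = x})
        < prb P {ω | U ω = u ∧ X ω = x} := (div_lt_one (hqpos u)).1 h1
    have h3 := hsplitZ u
    have h4 : prb P ({ω | Z ω = true} ∩ {ω | U ω = u ∧ X ω = x})
        = prb P {ω | Z ω = true ∧ U ω = u ∧ X ω = x} := rfl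
    linarith
  have hSzuxpos : ∀ z u, 0 < prb P {ω | Z ω = z ∧ U ω = u ∧ X ω = x} := by
    intro z u; cases z
    · exact hZf u
    · exact hZt u
  have hAt : ∀ z u, 0 < prb P {ω | A ω = true ∧ Z ω = z ∧ U ω = u ∧ X ω = x} := by
    intro z u
    have h1 := (hApos z u x).1
    rw [cprb] at h1
    rcases div_pos_iff.1 h1 with ⟨h2, _⟩ | ⟨_, h3⟩
    · exact h2
    · linarith [hSzuxpos z u]
  have hsplitA : ∀ z u, prb P {ω | Z ω = z ∧ U ω = u ∧ X ω = x}
      = prb P {ω | A ω = true ∧ Z ω = z ∧ U ω = u ∧ X ω = x}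
        + prb P {ω | A ω = false ∧ Z ω = z ∧ U ω = u ∧ X ω = x} := by
    intro z u
    have h := prb_split P A hA _ (mSzux z u)
    rw [Fintype.sum_bool] at h
    exact h
  have hAf : ∀ z u, 0 < prb P {ω | A ω = false ∧ Z ω = z ∧ U ω = u ∧ X ω = x} := by
    intro z u
    have h1 := (hApos z u x).2
    rw [cprb] at h1
    have h2 : prb P ({ω | A ω = true} ∩ {ω | Z ω = z ∧ U ω = u ∧ X ω = x})
        < prb P {ω | Z ω = z ∧ U ω = u ∧ X ω = x} := (div_lt_one (hSzuxpos z u)).1 h1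
    have h3 := hsplitA z u
    have h4 : prb P ({ω | A ω = true} ∩ {ω | Z ω = z ∧ U ω = u ∧ X ω = x})
        = prb P {ω | A ω = true ∧ Z ω = z ∧ U ω = u ∧ X ω = x} := rfl
    linarith
  have hSazuxpos : ∀ a z u, 0 < prb P {ω | A ω = a ∧ Z ω = z ∧ U ω = u ∧ X ω = x} := by
    intro a z u; cases a
    · exact hAf z u
    · exact hAt z u
  have hSxpos : 0 < prb P {ω | X ω = x} :=
    lt_of_lt_of_le (hqpos (U ω0)) (prbmono _ _ (fun ω h => h.2))
  have hSzxpos : ∀ z, 0 < prb P {ω | Z ω = z ∧ X ω = x} :=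
    fun z => lt_of_lt_of_le (hSzuxpos z (U ω0)) (prbmono _ _ (fun ω h => ⟨h.1, h.2.2⟩))
  have hSazxpos : ∀ a z, 0 < prb P {ω | A ω = a ∧ Z ω = z ∧ X ω = x} :=
    fun a z => lt_of_lt_of_le (hSazuxpos a z (U ω0))
      (prbmono _ _ (fun ω h => ⟨h.1, h.2.1, h.2.2.2⟩))
  -- integrability of differences
  have hDint : ∀ a : Bool, Integrable (fun ω => Ypo a true ω - Ypo a false ω) P :=
    fun a => (hYpoint a true).sub (hYpoint a false)
  -- A4 cell integrals
  have hcell : ∀ (a a' z : Bool) (u : 𝒰),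
      ∫ ω in {ω | A ω = a' ∧ Z ω = z ∧ U ω = u ∧ X ω = x},
          (Ypo a true ω - Ypo a false ω) ∂P
        = βZ x * prb P {ω | A ω = a' ∧ Z ω = z ∧ U ω = u ∧ X ω = x} := by
    intro a a' z u
    have h1 := hA4 a a' z u x
    rw [cex, div_eq_iff (ne_of_gt (hSazuxpos a' z u))] at h1
    exact h1
  -- integral of difference over {U = u, X = x}
  have hSuxD : ∀ (a : Bool) (u : 𝒰),
      ∫ ω in {ω | U ω = u ∧ X ω = x}, (Ypo a true ω - Ypo a false ω) ∂P
        = βZ x * prb P {ω | U ω = u ∧ X ω = x} := by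
    intro a u
    have hsplit := integral_split P (fun ω => (A ω, Z ω)) (hA.prodMk hZ) _ (mSux u) _ (hDint a)
    have hps := prb_split P (fun ω => (A ω, Z ω)) (hA.prodMk hZ) _ (mSux u)
    have hseteq : ∀ p : Bool × Bool, {ω | (A ω, Z ω) = p} ∩ {ω | U ω = u ∧ X ω = x}
        = {ω | A ω = p.1 ∧ Z ω = p.2 ∧ U ω = u ∧ X ω = x} := by
      intro p; ext ω; simp only [Set.mem_setOf_eq, Set.mem_inter_iff, Prod.ext_iff]; tauto
    rw [hsplit]
    have hps' : prb P {ω | U ω = u ∧ X ω = x}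
        = ∑ p : Bool × Bool, prb P {ω | A ω = p.1 ∧ Z ω = p.2 ∧ U ω = u ∧ X ω = x} := by
      rw [show prb P {ω | U ω = u ∧ X ω = x} = (P {ω | U ω = u ∧ X ω = x}).toReal from rfl, hps]
      exact Finset.sum_congr rfl fun p _ => by rw [hseteq p]; rfl
    calc ∑ p : Bool × Bool, ∫ ω in {ω | (A ω, Z ω) = p} ∩ {ω | U ω = u ∧ X ω = x},
            (Ypo a true ω - Ypo a false ω) ∂P
        = ∑ p : Bool × Bool, βZ x * prb P {ω | A ω = p.1 ∧ Z ω = p.2 ∧ U ω = u ∧ X ω = x} :=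
          Finset.sum_congr rfl fun p _ => by rw [hseteq p]; exact hcell a p.1 p.2 u
      _ = βZ x * ∑ p : Bool × Bool, prb P {ω | A ω = p.1 ∧ Z ω = p.2 ∧ U ω = u ∧ X ω = x} :=
          (Finset.mul_sum _ _ _).symm
      _ = βZ x * prb P {ω | U ω = u ∧ X ω = x} := by rw [← hps']
  -- conclusion 2
  have hconc2 : ∀ a : Bool,
      βZ x = cex P (fun ω => Ypo a true ω - Ypo a false ω) {ω | X ω = x} := by
    intro a
    have hsplit := integral_split P U hU _ mX _ (hDint a)
    have hps := prb_split P U hU _ mX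
    have hseteq : ∀ u : 𝒰, {ω | U ω = u} ∩ {ω | X ω = x} = {ω | U ω = u ∧ X ω = x} :=
      fun u => rfl
    have hnum : ∫ ω in {ω | X ω = x}, (Ypo a true ω - Ypo a false ω) ∂P
        = βZ x * prb P {ω | X ω = x} := by
      rw [hsplit]
      calc ∑ u, ∫ ω in {ω | U ω = u} ∩ {ω | X ω = x}, (Ypo a true ω - Ypo a false ω) ∂P
          = ∑ u, βZ x * prb P {ω | U ω = u ∧ X ω = x} :=
            Finset.sum_congr rfl fun u _ => by rw [hseteq u]; exact hSuxD a u
        _ = βZ x * ∑ u, prb P {ω | U ω = u ∧ X ω = x} := (Finset.mul_sum _ _ _).symm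
        _ = βZ x * prb P {ω | X ω = x} := by
            congr 1
            rw [show prb P {ω | X ω = x} = (P {ω | X ω = x}).toReal from rfl, hps]
            exact (Finset.sum_congr rfl fun u _ => by rw [hseteq u]; rfl).symm
    rw [cex, hnum, mul_div_assoc, div_self (ne_of_gt hSxpos), mul_one]
  -- A2: expectation version
  have hA2E : ∀ (a z z' : Bool) (u : 𝒰),
      prb P {ω | X ω = x} * ∫ ω in {ω | Z ω = z' ∧ U ω = u ∧ X ω = x}, Ypo a z ω ∂P
        = prb P {ω | Z ω = z' ∧ X ω = x}
          * ∫ ω in {ω | U ω = u ∧ X ω = x}, Ypo a z ω ∂P := by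
    intro a z z' u
    refine key_dist P (Ypo a z) (hYpo a z) _ _ (mSzux z' u) (mSux u)
      (P {ω | X ω = x}) (P {ω | Z ω = z' ∧ X ω = x}) (prbfin _) (prbfin _) ?_
    intro B hB
    have hmB' : MeasurableSet {p : 𝒰 × (Bool → Bool) × (Bool → Bool → ℝ) |
        p.1 = u ∧ p.2.2 a z ∈ B} := by
      have h1 : MeasurableSet {p : 𝒰 × (Bool → Bool) × (Bool → Bool → ℝ) | p.1 = u} :=
        measurable_fst (measurableSet_singleton u)
      have h2 : Measurable fun p : 𝒰 × (Bool → Bool) × (Bool → Bool → ℝ) => p.2.2 a z :=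
        measurable_snd.snd.eval.eval
      exact h1.inter (h2 hB)
    have h3 := hA2 z' x _ hmB'
    have hs1 : {ω | Z ω = z'} ∩ {ω | (U ω, fun z'' => Apo z'' ω, fun a' z'' => Ypo a' z'' ω)
          ∈ {p : 𝒰 × (Bool → Bool) × (Bool → Bool → ℝ) | p.1 = u ∧ p.2.2 a z ∈ B}}
          ∩ {ω | X ω = x}
        = Ypo a z ⁻¹' B ∩ {ω | Z ω = z' ∧ U ω = u ∧ X ω = x} := by
      ext ω; simp only [Set.mem_setOf_eq, Set.mem_inter_iff, Set.mem_preimage]; tauto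
    have hs2 : {ω | (U ω, fun z'' => Apo z'' ω, fun a' z'' => Ypo a' z'' ω)
          ∈ {p : 𝒰 × (Bool → Bool) × (Bool → Bool → ℝ) | p.1 = u ∧ p.2.2 a z ∈ B}}
          ∩ {ω | X ω = x}
        = Ypo a z ⁻¹' B ∩ {ω | U ω = u ∧ X ω = x} := by
      ext ω; simp only [Set.mem_setOf_eq, Set.mem_inter_iff, Set.mem_preimage]; tauto
    rw [hs1, hs2] at h3
    refine toReal_mul_eqENN (prbfin _) (prbfin _) (prbfin _) (prbfin _) ?_
    rw [mul_comm ((P {ω | X ω = x}).toReal)]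
    exact h3
  -- A2: measure-only version
  have hA2P : ∀ (z' : Bool) (u : 𝒰),
      prb P {ω | Z ω = z' ∧ U ω = u ∧ X ω = x} * prb P {ω | X ω = x}
        = prb P {ω | Z ω = z' ∧ X ω = x} * prb P {ω | U ω = u ∧ X ω = x} := by
    intro z' u
    have hmB : MeasurableSet {p : 𝒰 × (Bool → Bool) × (Bool → Bool → ℝ) | p.1 = u} :=
      measurable_fst (measurableSet_singleton u)
    have h3 := hA2 z' x _ hmB
    have hs1 : {ω | Z ω = z'} ∩ {ω | (U ω, fun z'' => Apo z'' ω, fun a' z'' => Ypo a' z'' ω)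
          ∈ {p : 𝒰 × (Bool → Bool) × (Bool → Bool → ℝ) | p.1 = u}} ∩ {ω | X ω = x}
        = {ω | Z ω = z' ∧ U ω = u ∧ X ω = x} := by
      ext ω; simp only [Set.mem_setOf_eq, Set.mem_inter_iff]; tauto
    have hs2 : {ω | (U ω, fun z'' => Apo z'' ω, fun a' z'' => Ypo a' z'' ω)
          ∈ {p : 𝒰 × (Bool → Bool) × (Bool → Bool → ℝ) | p.1 = u}} ∩ {ω | X ω = x}
        = {ω | U ω = u ∧ X ω = x} := by
      ext ω; simp only [Set.mem_setOf_eq, Set.mem_inter_iff]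
    rw [hs1, hs2] at h3
    exact h3
  -- A3: expectation version
  have hA3E : ∀ (z : Bool) (u : 𝒰),
      prb P {ω | Z ω = z ∧ U ω = u ∧ X ω = x}
          * ∫ ω in {ω | Apo z ω = true ∧ Z ω = z ∧ U ω = u ∧ X ω = x}, Ypo true z ω ∂P
        = prb P {ω | Apo z ω = true ∧ Z ω = z ∧ U ω = u ∧ X ω = x}
          * ∫ ω in {ω | Z ω = z ∧ U ω = u ∧ X ω = x}, Ypo true z ω ∂P := by
    intro z u
    refine key_dist P (Ypo true z) (hYpo true z) _ _ (mT z u) (mSzux z u)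
      (P {ω | Z ω = z ∧ U ω = u ∧ X ω = x})
      (P {ω | Apo z ω = true ∧ Z ω = z ∧ U ω = u ∧ X ω = x}) (prbfin _) (prbfin _) ?_
    intro B hB
    have h3 := hA3 true z z true B hB u x
    have hs1 : {ω | Apo z ω = true} ∩ {ω | Ypo true z ω ∈ B}
          ∩ {ω | Z ω = z ∧ U ω = u ∧ X ω = x}
        = Ypo true z ⁻¹' B ∩ {ω | Apo z ω = true ∧ Z ω = z ∧ U ω = u ∧ X ω = x} := by
      ext ω; simp only [Set.mem_setOf_eq, Set.mem_inter_iff, Set.mem_preimage]; tauto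
    rw [hs1] at h3
    refine toReal_mul_eqENN (prbfin _) (prbfin _) (prbfin _) (prbfin _) ?_
    rw [mul_comm ((P {ω | Z ω = z ∧ U ω = u ∧ X ω = x}).toReal)]
    exact h3
  -- consistency: a.e. set equality
  have hsetae : ∀ (z : Bool) (u : 𝒰),
      {ω | A ω = true ∧ Z ω = z ∧ U ω = u ∧ X ω = x}
        =ᵐ[P] {ω | Apo z ω = true ∧ Z ω = z ∧ U ω = u ∧ X ω = x} := by
    intro z u
    rw [Filter.eventuallyEq_set]
    filter_upwards [hconsA] with ω hω
    constructor
    · rintro ⟨h1, h2, h3⟩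
      refine ⟨?_, h2, h3⟩
      rw [← h2, ← hω]; exact h1
    · rintro ⟨h1, h2, h3⟩
      refine ⟨?_, h2, h3⟩
      rw [hω, h2]; exact h1
  have hprbT : ∀ z u, prb P {ω | Apo z ω = true ∧ Z ω = z ∧ U ω = u ∧ X ω = x}
      = prb P {ω | A ω = true ∧ Z ω = z ∧ U ω = u ∧ X ω = x} :=
    fun z u => congrArg ENNReal.toReal (measure_congr (hsetae z u).symm)
  have hIae : ∀ z u,
      ∫ ω in {ω | A ω = true ∧ Z ω = z ∧ U ω = u ∧ X ω = x}, Ypo true z ω ∂P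
        = ∫ ω in {ω | Apo z ω = true ∧ Z ω = z ∧ U ω = u ∧ X ω = x}, Ypo true z ω ∂P :=
    fun z u => setIntegral_congr_set (hsetae z u)
  have hIY : ∀ z u,
      ∫ ω in {ω | A ω = true ∧ Z ω = z ∧ U ω = u ∧ X ω = x}, Y ω ∂P
        = ∫ ω in {ω | A ω = true ∧ Z ω = z ∧ U ω = u ∧ X ω = x}, Ypo true z ω ∂P := by
    intro z u
    apply setIntegral_congr_ae (mSazux true z u)
    filter_upwards [hconsY] with ω hω hmem
    rw [hω, hmem.1, hmem.2.1]
  -- A5 consequence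
  have hA5' : ∀ z u, prb P {ω | A ω = true ∧ Z ω = z ∧ U ω = u ∧ X ω = x}
      = Real.exp (α1 z x + α2 u x) * prb P {ω | Z ω = z ∧ U ω = u ∧ X ω = x} := by
    intro z u
    have h1 := hA5 z u x
    rw [cprb, div_eq_iff (ne_of_gt (hSzuxpos z u))] at h1
    exact h1
  -- per-cell numerator
  have hcellY : ∀ z u, ∫ ω in {ω | A ω = true ∧ Z ω = z ∧ U ω = u ∧ X ω = x}, Y ω ∂P
      = Real.exp (α1 z x + α2 u x)
        * ((prb P {ω | Z ω = z ∧ X ω = x} / prb P {ω | X ω = x})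
          * ∫ ω in {ω | U ω = u ∧ X ω = x}, Ypo true z ω ∂P) := by
    intro z u
    rw [hIY z u, hIae z u]
    have h2 := hA3E z u
    rw [hprbT z u, hA5' z u] at h2
    have h4 : ∫ ω in {ω | Apo z ω = true ∧ Z ω = z ∧ U ω = u ∧ X ω = x}, Ypo true z ω ∂P
        = Real.exp (α1 z x + α2 u x)
          * ∫ ω in {ω | Z ω = z ∧ U ω = u ∧ X ω = x}, Ypo true z ω ∂P := by
      apply mul_left_cancel₀ (ne_of_gt (hSzuxpos z u))
      rw [h2]; ring
    rw [h4]
    have h5 := hA2E true z z u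
    have h6 : ∫ ω in {ω | Z ω = z ∧ U ω = u ∧ X ω = x}, Ypo true z ω ∂P
        = (prb P {ω | Z ω = z ∧ X ω = x} / prb P {ω | X ω = x})
          * ∫ ω in {ω | U ω = u ∧ X ω = x}, Ypo true z ω ∂P := by
      apply mul_left_cancel₀ (ne_of_gt hSxpos)
      rw [h5]
      field_simp
    rw [h6]
  -- per-cell probability
  have hcellP : ∀ z u, prb P {ω | A ω = true ∧ Z ω = z ∧ U ω = u ∧ X ω = x}
      = Real.exp (α1 z x + α2 u x)
        * ((prb P {ω | Z ω = z ∧ X ω = x} / prb P {ω | X ω = x})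
          * prb P {ω | U ω = u ∧ X ω = x}) := by
    intro z u
    rw [hA5' z u]
    congr 1
    have h5 := hA2P z u
    apply mul_left_cancel₀ (ne_of_gt hSxpos)
    field_simp
    linarith [h5]
  -- numerator and denominator sums
  have hNtot : ∀ z : Bool, ∫ ω in {ω | A ω = true ∧ Z ω = z ∧ X ω = x}, Y ω ∂P
      = ∑ u, Real.exp (α1 z x + α2 u x)
        * ((prb P {ω | Z ω = z ∧ X ω = x} / prb P {ω | X ω = x})
          * ∫ ω in {ω | U ω = u ∧ X ω = x}, Ypo true z ω ∂P) := by
    intro z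
    have hsplit := integral_split P U hU _ (mSazx true z) Y hYint
    have hseteq : ∀ u : 𝒰, {ω | U ω = u} ∩ {ω | A ω = true ∧ Z ω = z ∧ X ω = x}
        = {ω | A ω = true ∧ Z ω = z ∧ U ω = u ∧ X ω = x} := by
      intro u; ext ω; simp only [Set.mem_setOf_eq, Set.mem_inter_iff]; tauto
    rw [hsplit]
    exact Finset.sum_congr rfl fun u _ => by rw [hseteq u]; exact hcellY z u
  have hDtot : ∀ z : Bool, prb P {ω | A ω = true ∧ Z ω = z ∧ X ω = x}
      = ∑ u, Real.exp (α1 z x + α2 u x)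
        * ((prb P {ω | Z ω = z ∧ X ω = x} / prb P {ω | X ω = x})
          * prb P {ω | U ω = u ∧ X ω = x}) := by
    intro z
    have hps := prb_split P U hU _ (mSazx true z)
    have hseteq : ∀ u : 𝒰, {ω | U ω = u} ∩ {ω | A ω = true ∧ Z ω = z ∧ X ω = x}
        = {ω | A ω = true ∧ Z ω = z ∧ U ω = u ∧ X ω = x} := by
      intro u; ext ω; simp only [Set.mem_setOf_eq, Set.mem_inter_iff]; tauto
    rw [show prb P {ω | A ω = true ∧ Z ω = z ∧ X ω = x}
        = (P {ω | A ω = true ∧ Z ω = z ∧ X ω = x}).toReal from rfl, hps]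
    exact Finset.sum_congr rfl fun u _ => by rw [hseteq u]; exact hcellP z u
  -- the common weight sum
  have hWpos : 0 < ∑ u, Real.exp (α2 u x) * prb P {ω | U ω = u ∧ X ω = x} :=
    Finset.sum_pos (fun u _ => mul_pos (Real.exp_pos _) (hqpos u)) ⟨U ω0, Finset.mem_univ _⟩
  have hcexz : ∀ z : Bool, cex P Y {ω | A ω = true ∧ Z ω = z ∧ X ω = x}
      = (∑ u, Real.exp (α2 u x) * ∫ ω in {ω | U ω = u ∧ X ω = x}, Ypo true z ω ∂P)
        / ∑ u, Real.exp (α2 u x) * prb P {ω | U ω = u ∧ X ω = x} := by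
    intro z
    have hkpos : 0 < Real.exp (α1 z x) * (prb P {ω | Z ω = z ∧ X ω = x} / prb P {ω | X ω = x}) :=
      mul_pos (Real.exp_pos _) (div_pos (hSzxpos z) hSxpos)
    rw [cex, hNtot z, hDtot z]
    rw [show (∑ u, Real.exp (α1 z x + α2 u x)
        * ((prb P {ω | Z ω = z ∧ X ω = x} / prb P {ω | X ω = x})
          * ∫ ω in {ω | U ω = u ∧ X ω = x}, Ypo true z ω ∂P))
      = (Real.exp (α1 z x) * (prb P {ω | Z ω = z ∧ X ω = x} / prb P {ω | X ω = x}))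
        * ∑ u, Real.exp (α2 u x) * ∫ ω in {ω | U ω = u ∧ X ω = x}, Ypo true z ω ∂P from by
        rw [Finset.mul_sum]
        exact Finset.sum_congr rfl fun u _ => by rw [Real.exp_add]; ring]
    rw [show (∑ u, Real.exp (α1 z x + α2 u x)
        * ((prb P {ω | Z ω = z ∧ X ω = x} / prb P {ω | X ω = x})
          * prb P {ω | U ω = u ∧ X ω = x}))
      = (Real.exp (α1 z x) * (prb P {ω | Z ω = z ∧ X ω = x} / prb P {ω | X ω = x}))
        * ∑ u, Real.exp (α2 u x) * prb P {ω | U ω = u ∧ X ω = x} from by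
        rw [Finset.mul_sum]
        exact Finset.sum_congr rfl fun u _ => by rw [Real.exp_add]; ring]
    rw [mul_div_mul_left _ _ (ne_of_gt hkpos)]
  refine ⟨?_, hconc2⟩
  rw [hcexz true, hcexz false, div_sub_div_same]
  have hdiff : (∑ u, Real.exp (α2 u x) * ∫ ω in {ω | U ω = u ∧ X ω = x}, Ypo true true ω ∂P)
      - (∑ u, Real.exp (α2 u x) * ∫ ω in {ω | U ω = u ∧ X ω = x}, Ypo true false ω ∂P)
      = βZ x * ∑ u, Real.exp (α2 u x) * prb P {ω | U ω = u ∧ X ω = x} := by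
    rw [← Finset.sum_sub_distrib, Finset.mul_sum]
    refine Finset.sum_congr rfl fun u _ => ?_
    rw [← mul_sub]
    have hsub : (∫ ω in {ω | U ω = u ∧ X ω = x}, Ypo true true ω ∂P)
        - ∫ ω in {ω | U ω = u ∧ X ω = x}, Ypo true false ω ∂P
        = ∫ ω in {ω | U ω = u ∧ X ω = x}, (Ypo true true ω - Ypo true false ω) ∂P :=
      (integral_sub (hYpoint true true).integrableOn (hYpoint true false).integrableOn).symm
    rw [hsub, hSuxD true u]
    ring
  rw [hdiff, mul_div_assoc, div_self (ne_of_gt hWpos), mul_one]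
end

section
/- Under Assumptions A1–A5 and consistency, the Z-stratum-specific conditional treatment effects among the treated coincide and equal the conditional ATT: for every x∈𝒳 with P(A=1,X=x)>0, E[Y^{a=1,z=0} − Y^{a=0,z=0} | A=1, Z=0, X=x] = E[Y^{a=1,z=1} − Y^{a=0,z=1} | A=1, Z=1, X=x] = E[Y^{a=1} − Y^{a=0} | A=1, X=x]. -/
open MeasureTheory

open ProbabilityTheory


lemma bool_set_cases (s : Set Bool) : s = ∅ ∨ s = {false} ∨ s = {true} ∨ s = Set.univ := by
  by_cases ht : true ∈ s <;> by_cases hf : false ∈ s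
  · right; right; right; ext b; cases b <;> simp [ht, hf]
  · right; right; left; ext b; cases b <;> simp [ht, hf]
  · right; left; ext b; cases b <;> simp [ht, hf]
  · left; ext b; cases b <;> simp [ht, hf]

lemma indep_factorization {Ω β : Type*} [MeasurableSpace Ω] [MeasurableSpace β]
    (P : Measure Ω) [IsProbabilityMeasure P]
    (S : Set Ω) (hS : MeasurableSet S) (hS0 : P S ≠ 0)
    (f : Ω → Bool) (hf : Measurable f) (g : Ω → β) (hg : Measurable g)
    (hyp : ∀ (t : Bool) (B : Set β), MeasurableSet B →
      (P ({ω | f ω = t} ∩ {ω | g ω ∈ B} ∩ S)).toReal * (P S).toReal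
        = (P ({ω | f ω = t} ∩ S)).toReal * (P ({ω | g ω ∈ B} ∩ S)).toReal)
    (h : β → ℝ) (hh : Measurable h) (hint : IntegrableOn (fun ω => h (g ω)) S P)
    (t : Bool) :
    (∫ ω in {ω | f ω = t} ∩ S, h (g ω) ∂P) * (P S).toReal
      = (P ({ω | f ω = t} ∩ S)).toReal * ∫ ω in S, h (g ω) ∂P := by
  set μ := P[|S] with hμ
  have hPSfin : P S ≠ ⊤ := measure_ne_top P S
  have hcr : (P S).toReal ≠ 0 := by
    simp [ENNReal.toReal_ne_zero, hS0, hPSfin]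
  haveI : IsProbabilityMeasure μ := cond_isProbabilityMeasure hS0
  have hcond : ∀ E : Set Ω, μ E = (P S)⁻¹ * P (S ∩ E) := fun E => cond_apply hS P E
  -- independence of f and g under μ
  have hfin : ∀ E : Set Ω, μ E ≠ ⊤ := fun E => measure_ne_top μ E
  have hμtoReal : ∀ E : Set Ω, (μ E).toReal = (P (S ∩ E)).toReal / (P S).toReal := by
    intro E
    rw [hcond, ENNReal.toReal_mul, ENNReal.toReal_inv, div_eq_mul_inv, mul_comm]
  have hind : IndepFun f g μ := by
    rw [indepFun_iff_measure_inter_preimage_eq_mul]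
    intro s u hs hu
    rcases bool_set_cases s with rfl | rfl | rfl | rfl
    · simp
    · have key := hyp false u hu
      refine (ENNReal.toReal_eq_toReal_iff' (hfin _) (by finiteness)).mp ?_
      rw [hμtoReal, ENNReal.toReal_mul, hμtoReal, hμtoReal]
      have e1 : S ∩ (f ⁻¹' {false} ∩ g ⁻¹' u) = {ω | f ω = false} ∩ {ω | g ω ∈ u} ∩ S := by
        ext ω; simp only [Set.mem_inter_iff, Set.mem_preimage, Set.mem_singleton_iff, Set.mem_setOf_eq]; tauto
      have e2 : S ∩ f ⁻¹' {false} = {ω | f ω = false} ∩ S := by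
        ext ω; simp only [Set.mem_inter_iff, Set.mem_preimage, Set.mem_singleton_iff, Set.mem_setOf_eq]; tauto
      have e3 : S ∩ g ⁻¹' u = {ω | g ω ∈ u} ∩ S := by
        ext ω; simp only [Set.mem_inter_iff, Set.mem_preimage, Set.mem_singleton_iff, Set.mem_setOf_eq]; tauto
      rw [e1, e2, e3, div_mul_div_comm, ← key]
      field_simp
    · have key := hyp true u hu
      refine (ENNReal.toReal_eq_toReal_iff' (hfin _) (by finiteness)).mp ?_
      rw [hμtoReal, ENNReal.toReal_mul, hμtoReal, hμtoReal]
      have e1 : S ∩ (f ⁻¹' {true} ∩ g ⁻¹' u) = {ω | f ω = true} ∩ {ω | g ω ∈ u} ∩ S := by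
        ext ω; simp only [Set.mem_inter_iff, Set.mem_preimage, Set.mem_singleton_iff, Set.mem_setOf_eq]; tauto
      have e2 : S ∩ f ⁻¹' {true} = {ω | f ω = true} ∩ S := by
        ext ω; simp only [Set.mem_inter_iff, Set.mem_preimage, Set.mem_singleton_iff, Set.mem_setOf_eq]; tauto
      have e3 : S ∩ g ⁻¹' u = {ω | g ω ∈ u} ∩ S := by
        ext ω; simp only [Set.mem_inter_iff, Set.mem_preimage, Set.mem_singleton_iff, Set.mem_setOf_eq]; tauto
      rw [e1, e2, e3, div_mul_div_comm, ← key]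
      field_simp
    · rw [Set.preimage_univ, Set.univ_inter, measure_univ, one_mul]
  -- compose with indicator on the Bool side and h on the β side
  have hφ : Measurable (fun b : Bool => if b = t then (1:ℝ) else 0) := measurable_of_countable _
  have hind' : IndepFun ((fun b : Bool => if b = t then (1:ℝ) else 0) ∘ f) (h ∘ g) μ :=
    hind.comp hφ hh
  have hmul := hind'.integral_mul_eq_mul_integral ((hφ.comp hf).aestronglyMeasurable)
    ((hh.comp hg).aestronglyMeasurable)
  -- rewrite the three integrals over μ in terms of P
  have hrestrict : μ = (P S)⁻¹ • P.restrict S := by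
    rw [hμ]; rfl
  have hTmeas : MeasurableSet {ω | f ω = t} := hf (measurableSet_singleton t)
  have hι : ∀ ω, ((fun b : Bool => if b = t then (1:ℝ) else 0) ∘ f) ω * (h ∘ g) ω
      = Set.indicator {ω | f ω = t} (fun ω => h (g ω)) ω := by
    intro ω
    by_cases hω : f ω = t <;> simp [Set.indicator, hω, Set.mem_setOf_eq]
  have hIμ : ∀ (F : Ω → ℝ), ∫ ω, F ω ∂μ = (P S)⁻¹.toReal * ∫ ω in S, F ω ∂P := by
    intro F
    rw [hrestrict, integral_smul_measure]
    simp
  have hI1 : ∫ ω, (((fun b : Bool => if b = t then (1:ℝ) else 0) ∘ f) * (h ∘ g)) ω ∂μ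
      = (P S)⁻¹.toReal * ∫ ω in {ω | f ω = t} ∩ S, h (g ω) ∂P := by
    rw [show (((fun b : Bool => if b = t then (1:ℝ) else 0) ∘ f) * (h ∘ g))
        = Set.indicator {ω | f ω = t} (fun ω => h (g ω)) from funext hι]
    rw [hIμ]
    rw [integral_indicator hTmeas, Measure.restrict_restrict hTmeas]
  have hI2 : ∫ ω, ((fun b : Bool => if b = t then (1:ℝ) else 0) ∘ f) ω ∂μ
      = (P ({ω | f ω = t} ∩ S)).toReal / (P S).toReal := by
    have : ((fun b : Bool => if b = t then (1:ℝ) else 0) ∘ f)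
        = Set.indicator {ω | f ω = t} (fun _ => (1:ℝ)) := by
      funext ω; by_cases hω : f ω = t <;> simp [Set.indicator, hω, Set.mem_setOf_eq]
    rw [this, integral_indicator hTmeas]
    simp only [integral_const, smul_eq_mul, mul_one, Measure.restrict_apply_univ]
    rw [measureReal_def, Measure.restrict_apply_univ, hμtoReal, Set.inter_comm S]
  have hI3 : ∫ ω, (h ∘ g) ω ∂μ = (P S)⁻¹.toReal * ∫ ω in S, h (g ω) ∂P := hIμ _
  rw [hI1, hI2, hI3, ENNReal.toReal_inv] at hmul
  field_simp at hmul
  apply mul_right_cancel₀ hcr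
  linear_combination (P S).toReal * hmul

section Helpers
open ProbabilityTheory
variable {Ω : Type*} [MeasurableSpace Ω] (P : Measure Ω) [IsProbabilityMeasure P]

lemma bool_split_union (W : Ω → Bool) (s : Set Ω) :
    ({ω | W ω = true} ∩ s) ∪ ({ω | W ω = false} ∩ s) = s := by
  ext ω
  simp only [Set.mem_union, Set.mem_inter_iff, Set.mem_setOf_eq]
  rcases Bool.eq_false_or_eq_true (W ω) with h | h <;> simp [h]

lemma bool_split_disjoint (W : Ω → Bool) (s : Set Ω) :
    Disjoint ({ω | W ω = true} ∩ s) ({ω | W ω = false} ∩ s) := by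
  rw [Set.disjoint_left]
  rintro ω ⟨h1, -⟩ ⟨h2, -⟩
  simp only [Set.mem_setOf_eq] at h1 h2
  rw [h1] at h2; exact Bool.noConfusion h2

lemma measure_toReal_bool_split {W : Ω → Bool} (hW : Measurable W) {s : Set Ω}
    (hs : MeasurableSet s) :
    (P s).toReal = (P ({ω | W ω = true} ∩ s)).toReal + (P ({ω | W ω = false} ∩ s)).toReal := by
  conv_lhs => rw [← bool_split_union W s]
  rw [measure_union (bool_split_disjoint W s) ((hW (measurableSet_singleton false)).inter hs),
    ENNReal.toReal_add (measure_ne_top _ _) (measure_ne_top _ _)]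

lemma integral_bool_split {W : Ω → Bool} (hW : Measurable W) {s : Set Ω}
    (hs : MeasurableSet s) {g : Ω → ℝ} (hg : MeasureTheory.IntegrableOn g s P) :
    ∫ ω in s, g ω ∂P
      = (∫ ω in {ω | W ω = true} ∩ s, g ω ∂P) + ∫ ω in {ω | W ω = false} ∩ s, g ω ∂P := by
  conv_lhs => rw [← bool_split_union W s]
  exact setIntegral_union (bool_split_disjoint W s)
    ((hW (measurableSet_singleton false)).inter hs)
    (hg.mono_set Set.inter_subset_right) (hg.mono_set Set.inter_subset_right)

lemma measure_toReal_fintype_split {ι : Type*} [Fintype ι] [MeasurableSpace ι]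
    [MeasurableSingletonClass ι] {V : Ω → ι} (hV : Measurable V) {s : Set Ω}
    (hs : MeasurableSet s) :
    (P s).toReal = ∑ i, (P ({ω | V ω = i} ∩ s)).toReal := by
  have hunion : (⋃ i, ({ω | V ω = i} ∩ s)) = s := by
    ext ω; simp
  have hdisj : Pairwise (Function.onFun Disjoint fun i => {ω | V ω = i} ∩ s) := by
    intro i j hij
    rw [Function.onFun, Set.disjoint_left]
    rintro ω ⟨h1, -⟩ ⟨h2, -⟩
    simp only [Set.mem_setOf_eq] at h1 h2
    exact hij (h1 ▸ h2 ▸ rfl)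
  conv_lhs => rw [← hunion]
  rw [measure_iUnion hdisj (fun i => (hV (measurableSet_singleton i)).inter hs), tsum_fintype,
    ENNReal.toReal_sum (fun i _ => measure_ne_top _ _)]

lemma integral_fintype_split {ι : Type*} [Fintype ι] [MeasurableSpace ι]
    [MeasurableSingletonClass ι] {V : Ω → ι} (hV : Measurable V) {s : Set Ω}
    (hs : MeasurableSet s) {g : Ω → ℝ} (hg : MeasureTheory.IntegrableOn g s P) :
    ∫ ω in s, g ω ∂P = ∑ i, ∫ ω in {ω | V ω = i} ∩ s, g ω ∂P := by
  have hunion : (⋃ i, ({ω | V ω = i} ∩ s)) = s := by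
    ext ω; simp
  have hdisj : Pairwise (Function.onFun Disjoint fun i => {ω | V ω = i} ∩ s) := by
    intro i j hij
    rw [Function.onFun, Set.disjoint_left]
    rintro ω ⟨h1, -⟩ ⟨h2, -⟩
    simp only [Set.mem_setOf_eq] at h1 h2
    exact hij (h1 ▸ h2 ▸ rfl)
  conv_lhs => rw [← hunion]
  exact integral_iUnion_fintype (fun i => (hV (measurableSet_singleton i)).inter hs) hdisj
    (fun i => hg.mono_set Set.inter_subset_right)

lemma integral_of_cex {g : Ω → ℝ} {s : Set Ω} {c : ℝ} (h : cex P g s = c) :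
    ∫ ω in s, g ω ∂P = c * (P s).toReal := by
  by_cases h0 : P s = 0
  · rw [Measure.restrict_eq_zero.mpr h0, integral_zero_measure, h0]
    simp
  · have hne : (P s).toReal ≠ 0 := ENNReal.toReal_ne_zero.mpr ⟨h0, measure_ne_top _ _⟩
    rw [← h]
    unfold cex prb
    field_simp

end Helpers

/-- under A1–A5 and consistency, the Z-stratum-specific conditional
treatment effects among the treated coincide and equal the conditional ATT. -/
theorem Z_stratum_effects_coincide_with_conditional_ATT
    {Ω 𝒰 𝒳 : Type*} [MeasurableSpace Ω]
    [Fintype 𝒰] [MeasurableSpace 𝒰] [MeasurableSingletonClass 𝒰]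
    [Fintype 𝒳] [MeasurableSpace 𝒳] [MeasurableSingletonClass 𝒳]
    (P : Measure Ω) [IsProbabilityMeasure P]
    (Y : Ω → ℝ) (A Z : Ω → Bool) (U : Ω → 𝒰) (X : Ω → 𝒳)
    -- potential outcomes Y^{a,z} and potential treatments A^z
    (Ypo : Bool → Bool → Ω → ℝ) (Apo : Bool → Ω → Bool)
    (hY : Measurable Y) (hA : Measurable A) (hZ : Measurable Z)
    (hU : Measurable U) (hX : Measurable X)
    (hYpo : ∀ a z, Measurable (Ypo a z)) (hApo : ∀ z, Measurable (Apo z))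
    (hYint : Integrable Y P) (hYpoint : ∀ a z, Integrable (Ypo a z) P)
    -- positivity
    (hUXpos : ∀ u x, 0 < prb P {ω | U ω = u ∧ X ω = x})
    (hZpos : ∀ u x,
      0 < cprb P {ω | Z ω = true} {ω | U ω = u ∧ X ω = x} ∧
        cprb P {ω | Z ω = true} {ω | U ω = u ∧ X ω = x} < 1)
    (hApos : ∀ z u x,
      0 < cprb P {ω | A ω = true} {ω | Z ω = z ∧ U ω = u ∧ X ω = x} ∧
        cprb P {ω | A ω = true} {ω | Z ω = z ∧ U ω = u ∧ X ω = x} < 1)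
    -- consistency
    (hconsY : ∀ᵐ ω ∂P, Y ω = Ypo (A ω) (Z ω) ω)
    (hconsA : ∀ᵐ ω ∂P, A ω = Apo (Z ω) ω)
    -- A2 (independence): Z ⫫ (U, A^0, A^1, (Y^{a,z})_{a,z}) | X
    (hA2 : ∀ (z : Bool) (x : 𝒳) (B : Set (𝒰 × (Bool → Bool) × (Bool → Bool → ℝ))),
      MeasurableSet B →
      prb P ({ω | Z ω = z} ∩ {ω | (U ω, fun z' => Apo z' ω, fun a z' => Ypo a z' ω) ∈ B}
          ∩ {ω | X ω = x}) * prb P {ω | X ω = x}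
        = prb P ({ω | Z ω = z} ∩ {ω | X ω = x})
          * prb P ({ω | (U ω, fun z' => Apo z' ω, fun a z' => Ypo a z' ω) ∈ B}
              ∩ {ω | X ω = x}))
    -- A3 (latent exchangeability): A^{z*} ⫫ Y^{a,z} | Z = z, U, X
    (hA3 : ∀ (a z zs t : Bool) (B : Set ℝ), MeasurableSet B → ∀ (u : 𝒰) (x : 𝒳),
      prb P ({ω | Apo zs ω = t} ∩ {ω | Ypo a z ω ∈ B} ∩ {ω | Z ω = z ∧ U ω = u ∧ X ω = x})
          * prb P {ω | Z ω = z ∧ U ω = u ∧ X ω = x}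
        = prb P ({ω | Apo zs ω = t} ∩ {ω | Z ω = z ∧ U ω = u ∧ X ω = x})
          * prb P ({ω | Ypo a z ω ∈ B} ∩ {ω | Z ω = z ∧ U ω = u ∧ X ω = x}))
    -- A4 (stable direct effect)
    (βZ : 𝒳 → ℝ)
    (hA4 : ∀ (a a' z : Bool) (u : 𝒰) (x : 𝒳),
      cex P (fun ω => Ypo a true ω - Ypo a false ω)
        {ω | A ω = a' ∧ Z ω = z ∧ U ω = u ∧ X ω = x} = βZ x)
    -- A5 (multiplicative treatment model)
    (α1 : Bool → 𝒳 → ℝ) (α2 : 𝒰 → 𝒳 → ℝ)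
    (hα1 : ∀ x, α1 false x = 0)
    (hA5 : ∀ z u x,
      cprb P {ω | A ω = true} {ω | Z ω = z ∧ U ω = u ∧ X ω = x}
        = Real.exp (α1 z x + α2 u x))
    -- A1 (relevance)
    (hrel : ∀ x,
      cprb P {ω | A ω = true} {ω | Z ω = true ∧ X ω = x}
        ≠ cprb P {ω | A ω = true} {ω | Z ω = false ∧ X ω = x}) :
    ∀ x : 𝒳, 0 < prb P {ω | A ω = true ∧ X ω = x} →
      (cex P (fun ω => Ypo true false ω - Ypo false false ω)
          {ω | A ω = true ∧ Z ω = false ∧ X ω = x}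
        = cex P (fun ω => Ypo true true ω - Ypo false true ω)
            {ω | A ω = true ∧ Z ω = true ∧ X ω = x})
      ∧ (cex P (fun ω => Ypo true false ω - Ypo false false ω)
            {ω | A ω = true ∧ Z ω = false ∧ X ω = x}
          = cex P (fun ω => Ypo true (Z ω) ω - Ypo false (Z ω) ω)
              {ω | A ω = true ∧ X ω = x}) := by
  classical
  intro x hx
  -- basic nonemptiness
  have hΩne : (Set.univ : Set Ω).Nonempty := by
    apply nonempty_of_measure_ne_zero (μ := P)
    simp
  haveI hU_ne : Nonempty 𝒰 := ⟨U hΩne.choose⟩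
  -- measurability of basic sets
  have mX : MeasurableSet {ω | X ω = x} := hX (measurableSet_singleton x)
  have mUu : ∀ u : 𝒰, MeasurableSet {ω | U ω = u} := fun u => hU (measurableSet_singleton u)
  have mZz : ∀ z : Bool, MeasurableSet {ω | Z ω = z} := fun z => hZ (measurableSet_singleton z)
  have mAb : ∀ b : Bool, MeasurableSet {ω | A ω = b} := fun b => hA (measurableSet_singleton b)
  have mRU : ∀ u : 𝒰, MeasurableSet {ω | U ω = u ∧ X ω = x} := fun u => (mUu u).inter mX
  have mSZU : ∀ (z : Bool) (u : 𝒰), MeasurableSet {ω | Z ω = z ∧ U ω = u ∧ X ω = x} :=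
    fun z u => (mZz z).inter ((mUu u).inter mX)
  have mSAU : ∀ (z : Bool) (u : 𝒰),
      MeasurableSet {ω | A ω = true ∧ Z ω = z ∧ U ω = u ∧ X ω = x} :=
    fun z u => (mAb true).inter (mSZU z u)
  have mSA : ∀ z : Bool, MeasurableSet {ω | A ω = true ∧ Z ω = z ∧ X ω = x} :=
    fun z => (mAb true).inter ((mZz z).inter mX)
  have mT : MeasurableSet {ω | A ω = true ∧ X ω = x} := (mAb true).inter mX
  -- positivity facts
  have hrpos : ∀ u : 𝒰, 0 < (P {ω | U ω = u ∧ X ω = x}).toReal := fun u => hUXpos u x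
  have hnpos : ∀ (z : Bool) (u : 𝒰), 0 < (P {ω | Z ω = z ∧ U ω = u ∧ X ω = x}).toReal := by
    intro z u
    have hsplit := measure_toReal_bool_split P hZ (mRU u)
    have e1 : ({ω | Z ω = true} ∩ {ω | U ω = u ∧ X ω = x} : Set Ω)
        = {ω | Z ω = true ∧ U ω = u ∧ X ω = x} := rfl
    have e0 : ({ω | Z ω = false} ∩ {ω | U ω = u ∧ X ω = x} : Set Ω)
        = {ω | Z ω = false ∧ U ω = u ∧ X ω = x} := rfl
    rw [e1, e0] at hsplit
    have hc := hZpos u x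
    unfold cprb prb at hc
    rw [e1] at hc
    have hgt : 0 < (P {ω | Z ω = true ∧ U ω = u ∧ X ω = x}).toReal := by
      rcases div_pos_iff.mp hc.1 with ⟨h, -⟩ | ⟨-, h⟩
      · exact h
      · linarith [hrpos u]
    have hlt : (P {ω | Z ω = true ∧ U ω = u ∧ X ω = x}).toReal
        < (P {ω | U ω = u ∧ X ω = x}).toReal := (div_lt_one (hrpos u)).mp hc.2
    cases z
    · linarith
    · exact hgt
  have hmpos : ∀ (z : Bool) (u : 𝒰),
      0 < (P {ω | A ω = true ∧ Z ω = z ∧ U ω = u ∧ X ω = x}).toReal := by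
    intro z u
    have hc := (hApos z u x).1
    unfold cprb prb at hc
    have e : ({ω | A ω = true} ∩ {ω | Z ω = z ∧ U ω = u ∧ X ω = x} : Set Ω)
        = {ω | A ω = true ∧ Z ω = z ∧ U ω = u ∧ X ω = x} := rfl
    rw [e] at hc
    rcases div_pos_iff.mp hc with ⟨h, -⟩ | ⟨-, h⟩
    · exact h
    · linarith [hnpos z u]
  obtain ⟨u₀⟩ := hU_ne
  have hmono : ∀ s t : Set Ω, s ⊆ t → (P s).toReal ≤ (P t).toReal :=
    fun s t hst => ENNReal.toReal_mono (measure_ne_top _ _) (measure_mono hst)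
  have hppos : 0 < (P {ω | X ω = x}).toReal := by
    have := hmono {ω | U ω = u₀ ∧ X ω = x} {ω | X ω = x} (fun ω hω => hω.2)
    linarith [hrpos u₀]
  have hqpos : ∀ z : Bool, 0 < (P {ω | Z ω = z ∧ X ω = x}).toReal := by
    intro z
    have := hmono {ω | Z ω = z ∧ U ω = u₀ ∧ X ω = x} {ω | Z ω = z ∧ X ω = x}
      (fun ω hω => ⟨hω.1, hω.2.2⟩)
    linarith [hnpos z u₀]
  have hMpos : ∀ z : Bool, 0 < (P {ω | A ω = true ∧ Z ω = z ∧ X ω = x}).toReal := by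
    intro z
    have := hmono {ω | A ω = true ∧ Z ω = z ∧ U ω = u₀ ∧ X ω = x}
      {ω | A ω = true ∧ Z ω = z ∧ X ω = x} (fun ω hω => ⟨hω.1, hω.2.1, hω.2.2.2⟩)
    linarith [hmpos z u₀]
  -- consistency: swap A with Apo z on Z = z strata
  have hswap : ∀ (z : Bool) (u : 𝒰),
      ({ω | A ω = true ∧ Z ω = z ∧ U ω = u ∧ X ω = x} : Set Ω)
        =ᵐ[P] ((({ω | Apo z ω = true} : Set Ω) ∩ {ω | Z ω = z ∧ U ω = u ∧ X ω = x} : Set Ω)) := by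
    intro z u
    rw [Filter.eventuallyEq_set]
    filter_upwards [hconsA] with ω hω
    simp only [Set.mem_setOf_eq, Set.mem_inter_iff]
    constructor
    · rintro ⟨h1, h2, h3, h4⟩
      exact ⟨by rw [← h2, ← hω]; exact h1, h2, h3, h4⟩
    · rintro ⟨h1, h2, h3, h4⟩
      exact ⟨by rw [hω, h2]; exact h1, h2, h3, h4⟩
  -- Step C1 : A3 + consistency
  have hC1 : ∀ (a z : Bool) (u : 𝒰),
      (∫ ω in {ω | A ω = true ∧ Z ω = z ∧ U ω = u ∧ X ω = x}, Ypo a z ω ∂P)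
          * (P {ω | Z ω = z ∧ U ω = u ∧ X ω = x}).toReal
        = (P {ω | A ω = true ∧ Z ω = z ∧ U ω = u ∧ X ω = x}).toReal
          * ∫ ω in {ω | Z ω = z ∧ U ω = u ∧ X ω = x}, Ypo a z ω ∂P := by
    intro a z u
    have hPS0 : P {ω | Z ω = z ∧ U ω = u ∧ X ω = x} ≠ 0 := by
      intro h
      have := hnpos z u
      rw [h] at this
      simp at this
    have hfac := indep_factorization P _ (mSZU z u) hPS0 (Apo z) (hApo z) (Ypo a z) (hYpo a z)
      (fun t B hB => hA3 a z z t B hB u x) (fun r => r) measurable_id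
      ((hYpoint a z).integrableOn) true
    have hms := measure_congr (hswap z u)
    rw [← setIntegral_congr_set (hswap z u), ← hms] at hfac
    exact hfac
  -- A2, measure version
  have hA2meas : ∀ (z : Bool) (u : 𝒰),
      (P {ω | Z ω = z ∧ U ω = u ∧ X ω = x}).toReal * (P {ω | X ω = x}).toReal
        = (P {ω | Z ω = z ∧ X ω = x}).toReal * (P {ω | U ω = u ∧ X ω = x}).toReal := by
    intro z u
    have hB : MeasurableSet {w : 𝒰 × (Bool → Bool) × (Bool → Bool → ℝ) | w.1 = u} :=
      measurable_fst (measurableSet_singleton u)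
    have h := hA2 z x _ hB
    unfold prb at h
    have e1 : ({ω | Z ω = z} ∩
        {ω | (U ω, fun z' => Apo z' ω, fun a z' => Ypo a z' ω)
            ∈ {w : 𝒰 × (Bool → Bool) × (Bool → Bool → ℝ) | w.1 = u}} ∩ {ω | X ω = x} : Set Ω)
        = {ω | Z ω = z ∧ U ω = u ∧ X ω = x} := by
      ext ω
      simp only [Set.mem_inter_iff, Set.mem_setOf_eq]
      try tauto
    have e2 : ({ω | (U ω, fun z' => Apo z' ω, fun a z' => Ypo a z' ω)
            ∈ {w : 𝒰 × (Bool → Bool) × (Bool → Bool → ℝ) | w.1 = u}} ∩ {ω | X ω = x} : Set Ω)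
        = {ω | U ω = u ∧ X ω = x} := by
      ext ω
      simp only [Set.mem_inter_iff, Set.mem_setOf_eq]
      try tauto
    have e3 : ({ω | Z ω = z} ∩ {ω | X ω = x} : Set Ω) = {ω | Z ω = z ∧ X ω = x} := rfl
    rw [e1, e2, e3] at h
    exact h
  -- Step C2 : A2, integral version
  have hC2 : ∀ (a z : Bool) (u : 𝒰),
      (∫ ω in {ω | Z ω = z ∧ U ω = u ∧ X ω = x}, Ypo a z ω ∂P) * (P {ω | X ω = x}).toReal
        = (P {ω | Z ω = z ∧ X ω = x}).toReal
          * ∫ ω in {ω | U ω = u ∧ X ω = x}, Ypo a z ω ∂P := by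
    intro a z u
    have hgm : Measurable (fun ω => (U ω, Ypo a z ω)) := hU.prodMk (hYpo a z)
    have hψ : Measurable
        (fun w : 𝒰 × (Bool → Bool) × (Bool → Bool → ℝ) => (w.1, w.2.2 a z)) :=
      measurable_fst.prodMk
        ((measurable_pi_apply z).comp ((measurable_pi_apply a).comp
          (measurable_snd.comp measurable_snd)))
    have hyp : ∀ (t : Bool) (B : Set (𝒰 × ℝ)), MeasurableSet B →
        (P ({ω | Z ω = t} ∩ {ω | (fun ω => (U ω, Ypo a z ω)) ω ∈ B} ∩ {ω | X ω = x})).toReal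
            * (P {ω | X ω = x}).toReal
          = (P ({ω | Z ω = t} ∩ {ω | X ω = x})).toReal
            * (P ({ω | (fun ω => (U ω, Ypo a z ω)) ω ∈ B} ∩ {ω | X ω = x})).toReal := by
      intro t B hB
      have h := hA2 t x _ (hψ hB)
      unfold prb at h
      exact h
    have hPS0 : P {ω | X ω = x} ≠ 0 := by
      intro h
      rw [h] at hppos
      simp at hppos
    have hhm : Measurable (fun p : 𝒰 × ℝ => if p.1 = u then p.2 else 0) :=
      Measurable.ite (measurable_fst (measurableSet_singleton u)) measurable_snd
        measurable_const
    have hfeq : (fun ω => if U ω = u then Ypo a z ω else 0)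
        = Set.indicator {ω | U ω = u} (Ypo a z) := by
      funext ω
      simp only [Set.indicator_apply, Set.mem_setOf_eq]
    have hint : IntegrableOn (fun ω => if U ω = u then Ypo a z ω else 0) {ω | X ω = x} P := by
      rw [hfeq]
      exact ((hYpoint a z).indicator (mUu u)).integrableOn
    have hfac := indep_factorization P _ mX hPS0 Z hZ (fun ω => (U ω, Ypo a z ω)) hgm hyp
      (fun p : 𝒰 × ℝ => if p.1 = u then p.2 else 0) hhm hint z
    have hfac' : (∫ ω in ({ω | Z ω = z} ∩ {ω | X ω = x} : Set Ω),
            (if U ω = u then Ypo a z ω else 0) ∂P) * (P {ω | X ω = x}).toReal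
        = (P (({ω | Z ω = z} : Set Ω) ∩ {ω | X ω = x})).toReal
          * ∫ ω in {ω | X ω = x}, (if U ω = u then Ypo a z ω else 0) ∂P := hfac
    have hiota : ∀ s : Set Ω,
        (∫ ω in s, (if U ω = u then Ypo a z ω else 0) ∂P)
          = ∫ ω in s ∩ {ω | U ω = u}, Ypo a z ω ∂P := by
      intro s
      rw [hfeq]
      exact setIntegral_indicator (mUu u)
    rw [hiota, hiota] at hfac'
    have e1 : (({ω | Z ω = z} ∩ {ω | X ω = x} : Set Ω) ∩ {ω | U ω = u} : Set Ω)
        = {ω | Z ω = z ∧ U ω = u ∧ X ω = x} := by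
      ext ω
      simp only [Set.mem_inter_iff, Set.mem_setOf_eq]
      try tauto
    have e2 : ({ω | X ω = x} ∩ {ω | U ω = u} : Set Ω) = {ω | U ω = u ∧ X ω = x} := by
      ext ω
      simp only [Set.mem_inter_iff, Set.mem_setOf_eq]
      try tauto
    have e3 : ({ω | Z ω = z} ∩ {ω | X ω = x} : Set Ω) = {ω | Z ω = z ∧ X ω = x} := rfl
    rw [e1, e2, e3] at hfac'
    exact hfac'
    -- integrability of differences
  have hDint : ∀ a b z z' : Bool, Integrable (fun ω => Ypo a z ω - Ypo b z' ω) P :=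
    fun a b z z' => (hYpoint a z).sub (hYpoint b z')
  -- A4 on each (A, Z) stratum
  have hG4 : ∀ (a a' z : Bool) (u : 𝒰),
      ∫ ω in {ω | A ω = a' ∧ Z ω = z ∧ U ω = u ∧ X ω = x}, (Ypo a true ω - Ypo a false ω) ∂P
        = βZ x * (P {ω | A ω = a' ∧ Z ω = z ∧ U ω = u ∧ X ω = x}).toReal :=
    fun a a' z u => integral_of_cex P (hA4 a a' z u x)
  -- Step C4 : A4 averaged over (A, Z) strata
  have hC4 : ∀ (a : Bool) (u : 𝒰),
      ∫ ω in {ω | U ω = u ∧ X ω = x}, (Ypo a true ω - Ypo a false ω) ∂P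
        = βZ x * (P {ω | U ω = u ∧ X ω = x}).toReal := by
    intro a u
    have eAZ : ∀ a' z : Bool,
        (({ω | Z ω = z} : Set Ω) ∩ (({ω | A ω = a'} : Set Ω) ∩ {ω | U ω = u ∧ X ω = x}))
          = {ω | A ω = a' ∧ Z ω = z ∧ U ω = u ∧ X ω = x} := by
      intro a' z
      ext ω
      simp only [Set.mem_inter_iff, Set.mem_setOf_eq]
      try tauto
    have hsplitI := integral_bool_split P hA (mRU u) ((hDint a a true false).integrableOn)
    have hIa : ∀ a' : Bool,
        ∫ ω in ({ω | A ω = a'} : Set Ω) ∩ {ω | U ω = u ∧ X ω = x},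
            (Ypo a true ω - Ypo a false ω) ∂P
          = (∫ ω in {ω | A ω = a' ∧ Z ω = true ∧ U ω = u ∧ X ω = x},
              (Ypo a true ω - Ypo a false ω) ∂P)
            + ∫ ω in {ω | A ω = a' ∧ Z ω = false ∧ U ω = u ∧ X ω = x},
              (Ypo a true ω - Ypo a false ω) ∂P := by
      intro a'
      rw [integral_bool_split P hZ ((mAb a').inter (mRU u)) ((hDint a a true false).integrableOn),
        eAZ a' true, eAZ a' false]
    have hma : ∀ a' : Bool,
        (P (({ω | A ω = a'} : Set Ω) ∩ {ω | U ω = u ∧ X ω = x})).toReal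
          = (P {ω | A ω = a' ∧ Z ω = true ∧ U ω = u ∧ X ω = x}).toReal
            + (P {ω | A ω = a' ∧ Z ω = false ∧ U ω = u ∧ X ω = x}).toReal := by
      intro a'
      rw [measure_toReal_bool_split P hZ ((mAb a').inter (mRU u)), eAZ a' true, eAZ a' false]
    have hsplitM := measure_toReal_bool_split P hA (mRU u)
    rw [hsplitI, hIa true, hIa false, hG4 a true true u, hG4 a true false u,
      hG4 a false true u, hG4 a false false u, hsplitM, hma true, hma false]
    ring
  -- combine C1, C2, A2meas
  have hstep : ∀ (a z : Bool) (u : 𝒰),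
      ∫ ω in {ω | A ω = true ∧ Z ω = z ∧ U ω = u ∧ X ω = x}, Ypo a z ω ∂P
        = (P {ω | A ω = true ∧ Z ω = z ∧ U ω = u ∧ X ω = x}).toReal
          * ((∫ ω in {ω | U ω = u ∧ X ω = x}, Ypo a z ω ∂P)
            / (P {ω | U ω = u ∧ X ω = x}).toReal) := by
    intro a z u
    have h1 := hC1 a z u
    have h2 := hC2 a z u
    have h3 := hA2meas z u
    have hr := hrpos u
    have hn := hnpos z u
    have hp := hppos
    set I := ∫ ω in {ω | A ω = true ∧ Z ω = z ∧ U ω = u ∧ X ω = x}, Ypo a z ω ∂P with hIdef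
    set K := ∫ ω in {ω | Z ω = z ∧ U ω = u ∧ X ω = x}, Ypo a z ω ∂P with hKdef
    set J := ∫ ω in {ω | U ω = u ∧ X ω = x}, Ypo a z ω ∂P with hJdef
    set m := (P {ω | A ω = true ∧ Z ω = z ∧ U ω = u ∧ X ω = x}).toReal with hmdef
    set n := (P {ω | Z ω = z ∧ U ω = u ∧ X ω = x}).toReal with hndef
    set p := (P {ω | X ω = x}).toReal with hpdef
    set q := (P {ω | Z ω = z ∧ X ω = x}).toReal with hqdef
    set r := (P {ω | U ω = u ∧ X ω = x}).toReal with hrdef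
    have hr0 : r ≠ 0 := ne_of_gt hr
    have hnp : n * p ≠ 0 := ne_of_gt (mul_pos hn hp)
    rw [← mul_div_assoc, eq_div_iff hr0]
    apply mul_right_cancel₀ hnp
    linear_combination (r * p) * h1 + (m * r) * h2 - (m * J) * h3
  -- the per-stratum key identity
  have hkey : ∀ (z : Bool) (u : 𝒰),
      ∫ ω in {ω | A ω = true ∧ Z ω = z ∧ U ω = u ∧ X ω = x},
          (Ypo true z ω - Ypo false z ω) ∂P
        = (P {ω | A ω = true ∧ Z ω = z ∧ U ω = u ∧ X ω = x}).toReal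
          * ((∫ ω in {ω | U ω = u ∧ X ω = x},
              (Ypo true false ω - Ypo false false ω) ∂P)
            / (P {ω | U ω = u ∧ X ω = x}).toReal) := by
    intro z u
    have hsubS : ∫ ω in {ω | A ω = true ∧ Z ω = z ∧ U ω = u ∧ X ω = x},
          (Ypo true z ω - Ypo false z ω) ∂P
        = (∫ ω in {ω | A ω = true ∧ Z ω = z ∧ U ω = u ∧ X ω = x}, Ypo true z ω ∂P)
          - ∫ ω in {ω | A ω = true ∧ Z ω = z ∧ U ω = u ∧ X ω = x}, Ypo false z ω ∂P :=
      integral_sub ((hYpoint true z).integrableOn) ((hYpoint false z).integrableOn)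
    have hsubR : ∀ aa bb zz zb : Bool,
        ∫ ω in {ω | U ω = u ∧ X ω = x}, (Ypo aa zz ω - Ypo bb zb ω) ∂P
          = (∫ ω in {ω | U ω = u ∧ X ω = x}, Ypo aa zz ω ∂P)
            - ∫ ω in {ω | U ω = u ∧ X ω = x}, Ypo bb zb ω ∂P :=
      fun aa bb zz zb =>
        integral_sub ((hYpoint aa zz).integrableOn) ((hYpoint bb zb).integrableOn)
    have hJ : ∀ aa : Bool,
        (∫ ω in {ω | U ω = u ∧ X ω = x}, Ypo aa true ω ∂P)
            - ∫ ω in {ω | U ω = u ∧ X ω = x}, Ypo aa false ω ∂P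
          = βZ x * (P {ω | U ω = u ∧ X ω = x}).toReal := by
      intro aa
      rw [← hsubR aa aa true false]
      exact hC4 aa u
    rw [hsubS, hstep true z u, hstep false z u, hsubR true false false false]
    cases z
    · ring
    · linear_combination
        ((P {ω | A ω = true ∧ Z ω = true ∧ U ω = u ∧ X ω = x}).toReal
          / (P {ω | U ω = u ∧ X ω = x}).toReal) * hJ true
        - ((P {ω | A ω = true ∧ Z ω = true ∧ U ω = u ∧ X ω = x}).toReal
          / (P {ω | U ω = u ∧ X ω = x}).toReal) * hJ false
  -- A5 : multiplicative structure of the stratum masses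
  have hm5 : ∀ (z : Bool) (u : 𝒰),
      (P {ω | A ω = true ∧ Z ω = z ∧ U ω = u ∧ X ω = x}).toReal
        = Real.exp (α1 z x) * Real.exp (α2 u x)
          * (P {ω | Z ω = z ∧ U ω = u ∧ X ω = x}).toReal := by
    intro z u
    have h := hA5 z u x
    unfold cprb prb at h
    have e : ({ω | A ω = true} ∩ {ω | Z ω = z ∧ U ω = u ∧ X ω = x} : Set Ω)
        = {ω | A ω = true ∧ Z ω = z ∧ U ω = u ∧ X ω = x} := rfl
    rw [e, div_eq_iff (ne_of_gt (hnpos z u))] at h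
    rw [h, Real.exp_add]
  have hmzw : ∀ (z : Bool) (u : 𝒰),
      (P {ω | A ω = true ∧ Z ω = z ∧ U ω = u ∧ X ω = x}).toReal
        = (Real.exp (α1 z x) * (P {ω | Z ω = z ∧ X ω = x}).toReal / (P {ω | X ω = x}).toReal)
          * (Real.exp (α2 u x) * (P {ω | U ω = u ∧ X ω = x}).toReal) := by
    intro z u
    rw [hm5 z u]
    have h3 := hA2meas z u
    have hp0 : (P {ω | X ω = x}).toReal ≠ 0 := ne_of_gt hppos
    field_simp
    linear_combination h3
  -- sum over the latent variable
  have eUSA : ∀ (z : Bool) (u : 𝒰),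
      (({ω | U ω = u} : Set Ω) ∩ {ω | A ω = true ∧ Z ω = z ∧ X ω = x})
        = {ω | A ω = true ∧ Z ω = z ∧ U ω = u ∧ X ω = x} := by
    intro z u
    ext ω
    simp only [Set.mem_inter_iff, Set.mem_setOf_eq]
    try tauto
  have hMsum : ∀ z : Bool, (P {ω | A ω = true ∧ Z ω = z ∧ X ω = x}).toReal
      = ∑ u, (P {ω | A ω = true ∧ Z ω = z ∧ U ω = u ∧ X ω = x}).toReal := by
    intro z
    rw [measure_toReal_fintype_split P hU (mSA z)]
    exact Finset.sum_congr rfl fun u _ => by rw [eUSA z u]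
  have hIsum : ∀ z : Bool,
      ∫ ω in {ω | A ω = true ∧ Z ω = z ∧ X ω = x}, (Ypo true z ω - Ypo false z ω) ∂P
        = ∑ u, ∫ ω in {ω | A ω = true ∧ Z ω = z ∧ U ω = u ∧ X ω = x},
            (Ypo true z ω - Ypo false z ω) ∂P := by
    intro z
    rw [integral_fintype_split P hU (mSA z) ((hDint true false z z).integrableOn)]
    exact Finset.sum_congr rfl fun u _ => by rw [eUSA z u]
  -- numerator and denominator factor through a common z-dependent constant
  have hIzf : ∀ z : Bool,
      ∫ ω in {ω | A ω = true ∧ Z ω = z ∧ X ω = x}, (Ypo true z ω - Ypo false z ω) ∂P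
        = (Real.exp (α1 z x) * (P {ω | Z ω = z ∧ X ω = x}).toReal / (P {ω | X ω = x}).toReal)
          * ∑ u, Real.exp (α2 u x)
            * ∫ ω in {ω | U ω = u ∧ X ω = x}, (Ypo true false ω - Ypo false false ω) ∂P := by
    intro z
    rw [hIsum z, Finset.mul_sum]
    refine Finset.sum_congr rfl fun u _ => ?_
    rw [hkey z u, hmzw z u]
    have hr0 : (P {ω | U ω = u ∧ X ω = x}).toReal ≠ 0 := ne_of_gt (hrpos u)
    field_simp
  have hMzf : ∀ z : Bool,
      (P {ω | A ω = true ∧ Z ω = z ∧ X ω = x}).toReal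
        = (Real.exp (α1 z x) * (P {ω | Z ω = z ∧ X ω = x}).toReal / (P {ω | X ω = x}).toReal)
          * ∑ u, Real.exp (α2 u x) * (P {ω | U ω = u ∧ X ω = x}).toReal := by
    intro z
    rw [hMsum z, Finset.mul_sum]
    exact Finset.sum_congr rfl fun u _ => by rw [hmzw z u]
  have hW : 0 < ∑ u, Real.exp (α2 u x) * (P {ω | U ω = u ∧ X ω = x}).toReal :=
    Finset.sum_pos (fun u _ => mul_pos (Real.exp_pos _) (hrpos u)) ⟨u₀, Finset.mem_univ u₀⟩
  have hcz : ∀ z : Bool,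
      0 < Real.exp (α1 z x) * (P {ω | Z ω = z ∧ X ω = x}).toReal / (P {ω | X ω = x}).toReal :=
    fun z => div_pos (mul_pos (Real.exp_pos _) (hqpos z)) hppos
  have hV : ∀ z : Bool,
      cex P (fun ω => Ypo true z ω - Ypo false z ω) {ω | A ω = true ∧ Z ω = z ∧ X ω = x}
        = (∑ u, Real.exp (α2 u x)
            * ∫ ω in {ω | U ω = u ∧ X ω = x}, (Ypo true false ω - Ypo false false ω) ∂P)
          / ∑ u, Real.exp (α2 u x) * (P {ω | U ω = u ∧ X ω = x}).toReal := by
    intro z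
    unfold cex prb
    rw [hIzf z, hMzf z, mul_div_mul_left _ _ (ne_of_gt (hcz z))]
  refine ⟨by rw [hV false, hV true], ?_⟩
  rw [hV false]
  -- the ATT part
  have hVM : ∀ z : Bool,
      ∫ ω in {ω | A ω = true ∧ Z ω = z ∧ X ω = x}, (Ypo true z ω - Ypo false z ω) ∂P
        = ((∑ u, Real.exp (α2 u x)
            * ∫ ω in {ω | U ω = u ∧ X ω = x}, (Ypo true false ω - Ypo false false ω) ∂P)
              / ∑ u, Real.exp (α2 u x) * (P {ω | U ω = u ∧ X ω = x}).toReal)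
          * (P {ω | A ω = true ∧ Z ω = z ∧ X ω = x}).toReal := by
    intro z
    rw [hIzf z, hMzf z]
    have hW0 : (∑ u, Real.exp (α2 u x) * (P {ω | U ω = u ∧ X ω = x}).toReal) ≠ 0 :=
      ne_of_gt hW
    field_simp
  have hFint : Integrable (fun ω => Ypo true (Z ω) ω - Ypo false (Z ω) ω) P := by
    have hFdef : (fun ω => Ypo true (Z ω) ω - Ypo false (Z ω) ω)
        = (fun ω =>
            Set.indicator {ω | Z ω = true} (fun ω => Ypo true true ω - Ypo false true ω) ω
            + Set.indicator {ω | Z ω = false}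
                (fun ω => Ypo true false ω - Ypo false false ω) ω) := by
      funext ω
      rcases Bool.eq_false_or_eq_true (Z ω) with h | h <;>
        simp [Set.indicator_apply, h]
    rw [hFdef]
    exact ((hDint true false true true).indicator (mZz true)).add
      ((hDint true false false false).indicator (mZz false))
  have eZT : ∀ z : Bool, (({ω | Z ω = z} : Set Ω) ∩ {ω | A ω = true ∧ X ω = x})
      = {ω | A ω = true ∧ Z ω = z ∧ X ω = x} := by
    intro z
    ext ω
    simp only [Set.mem_inter_iff, Set.mem_setOf_eq]
    try tauto
  have hTI := integral_bool_split P hZ mT (hFint.integrableOn)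
  rw [eZT true, eZT false] at hTI
  have hTM := measure_toReal_bool_split P hZ mT
  rw [eZT true, eZT false] at hTM
  have hSAF : ∀ z : Bool,
      ∫ ω in {ω | A ω = true ∧ Z ω = z ∧ X ω = x},
          (Ypo true (Z ω) ω - Ypo false (Z ω) ω) ∂P
        = ∫ ω in {ω | A ω = true ∧ Z ω = z ∧ X ω = x}, (Ypo true z ω - Ypo false z ω) ∂P := by
    intro z
    refine setIntegral_congr_fun (mSA z) fun ω hω => ?_
    simp only [Set.mem_setOf_eq] at hω
    rw [hω.2.1]
  unfold cex prb
  rw [hTI, hSAF true, hSAF false, hVM true, hVM false, hTM]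
  have hden : (P {ω | A ω = true ∧ Z ω = true ∧ X ω = x}).toReal
      + (P {ω | A ω = true ∧ Z ω = false ∧ X ω = x}).toReal ≠ 0 := by
    have := hMpos true
    have := hMpos false
    positivity
  rw [eq_div_iff hden]
  ring
end

section
/- (Multiple robustness, model M1.) Let the propensity-type nuisances p_z and π_z be evaluated at their true values, and let δ̃*, w̃, ẽ_{11}, ẽ_{10} be arbitrary bounded functions on 𝒳, with φ̃ := ẽ_{11} − ẽ_{10}. Define θ̃(O) = [ρ(X)/(p_1(X)−p_0(X))]·[(2Z−1)/π_Z(X)]·{Y − Aδ̃*(X) − Zφ̃(X) − w̃(X) − (A/p_Z(X))·(Y − Zφ̃(X) − ẽ_{10}(X))}. Then the plug-in influence function remains an unbiased moment equation for the true δ*_m: E[A(δ̃*(X) − δ*_m) + θ̃(O)] = 0. -/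
open MeasureTheory

/-- A `{0,1}`-valued variable as a real number. -/
noncomputable def b2r (b : Bool) : ℝ := if b then 1 else 0


section helpers
variable {Ω : Type*} [MeasurableSpace Ω] {P : Measure Ω}

lemma prb_eq_setIntegral_one [IsFiniteMeasure P] (s : Set Ω) :
    prb P s = ∫ _ in s, (1 : ℝ) ∂P := by
  rw [setIntegral_const, smul_eq_mul, mul_one, prb, Measure.real]

lemma setIntegral_partition {β : Type*} [Fintype β] [MeasurableSpace β]
    [MeasurableSingletonClass β] {V : Ω → β} (hV : Measurable V)
    {f : Ω → ℝ} (hf : Integrable f P) {s : Set Ω} (hs : MeasurableSet s) :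
    ∫ ω in s, f ω ∂P = ∑ b : β, ∫ ω in s ∩ {ω | V ω = b}, f ω ∂P := by
  have hs' : s = ⋃ b, s ∩ {ω | V ω = b} := by ext ω; simp
  have hmeas : ∀ b, MeasurableSet (s ∩ {ω | V ω = b}) :=
    fun b => hs.inter (hV (measurableSet_singleton b))
  have hdisj : Pairwise (Function.onFun Disjoint fun b => s ∩ {ω | V ω = b}) := by
    intro b b' hbb'
    refine Set.disjoint_left.2 fun ω hω hω' => hbb' ?_
    exact hω.2.symm.trans hω'.2
  rw [← tsum_fintype (L := SummationFilter.unconditional β)]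
  conv_lhs => rw [hs']
  exact integral_iUnion hmeas hdisj (hs' ▸ hf.integrableOn)

lemma prb_partition {β : Type*} [Fintype β] [MeasurableSpace β]
    [MeasurableSingletonClass β] [IsFiniteMeasure P] {V : Ω → β} (hV : Measurable V)
    {s : Set Ω} (hs : MeasurableSet s) :
    prb P s = ∑ b : β, prb P (s ∩ {ω | V ω = b}) := by
  simp_rw [prb_eq_setIntegral_one]
  exact setIntegral_partition hV (integrable_const 1) hs

lemma integrable_comp_fin {β : Type*} [Fintype β] [MeasurableSpace β]
    [MeasurableSingletonClass β] [IsFiniteMeasure P] {V : Ω → β} (hV : Measurable V)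
    (F : β → ℝ) : Integrable (fun ω => F (V ω)) P := by
  obtain ⟨C, hC⟩ := Finite.exists_le fun b => ‖F b‖
  have hmeas : Measurable fun ω => F (V ω) := (measurable_of_countable F).comp hV
  exact (integrable_const C).mono' hmeas.aestronglyMeasurable (ae_of_all _ fun ω => hC (V ω))

end helpers

set_option maxHeartbeats 2000000 in
/-- Multiple robustness, model M1: with the true propensity-type
nuisances `p_z`, `π_z` and arbitrary bounded outcome-type nuisances, the plug-in
influence function remains an unbiased moment equation for the true `δ*_m`. -/
theorem multiple_robustness_M1
    {Ω 𝒳 : Type*} [MeasurableSpace Ω]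
    [Fintype 𝒳] [MeasurableSpace 𝒳] [MeasurableSingletonClass 𝒳]
    (P : Measure Ω) [IsProbabilityMeasure P]
    (Y : Ω → ℝ) (A Z : Ω → Bool) (X : Ω → 𝒳)
    (hY : Measurable Y) (hA : Measurable A) (hZ : Measurable Z) (hX : Measurable X)
    (hYint : Integrable Y P)
    -- positivity
    (hXpos : ∀ x, 0 < prb P {ω | X ω = x})
    (hApos : 0 < prb P {ω | A ω = true})
    -- nuisance functions
    (p π : Bool → 𝒳 → ℝ)
    (hp : ∀ z x, p z x = cprb P {ω | A ω = true} {ω | Z ω = z ∧ X ω = x})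
    (hπ : ∀ z x, π z x = cprb P {ω | Z ω = z} {ω | X ω = x})
    (hppos : ∀ z x, 0 < p z x ∧ p z x < 1)
    (hπpos : ∀ z x, 0 < π z x ∧ π z x < 1)
    -- relevance
    (hrel : ∀ x, p true x ≠ p false x)
    (e : Bool → 𝒳 → ℝ)
    (he : ∀ z x, e z x = cex P Y {ω | Z ω = z ∧ X ω = x})
    (e1z : Bool → 𝒳 → ℝ)
    (he1z : ∀ z x, e1z z x = cex P Y {ω | A ω = true ∧ Z ω = z ∧ X ω = x})
    (φ : 𝒳 → ℝ) (hφ : ∀ x, φ x = e1z true x - e1z false x)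
    (δs : 𝒳 → ℝ)
    (hδs : ∀ x, δs x = (e true x - e false x) / (p true x - p false x)
      - φ x / (p true x - p false x))
    (δm : ℝ) (hδm : δm = cex P (fun ω => δs (X ω)) {ω | A ω = true})
    (ρ : 𝒳 → ℝ) (hρ : ∀ x, ρ x = cprb P {ω | A ω = true} {ω | X ω = x})
    -- arbitrary bounded outcome-type nuisances
    (δt wt e11t e10t : 𝒳 → ℝ)
    (hbd : ∃ C : ℝ, ∀ x, |δt x| ≤ C ∧ |wt x| ≤ C ∧ |e11t x| ≤ C ∧ |e10t x| ≤ C)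
    (φt : 𝒳 → ℝ) (hφt : ∀ x, φt x = e11t x - e10t x)
    (θt : Ω → ℝ)
    (hθt : ∀ ω, θt ω =
      ρ (X ω) / (p true (X ω) - p false (X ω)) * ((2 * b2r (Z ω) - 1) / π (Z ω) (X ω))
        * (Y ω - b2r (A ω) * δt (X ω) - b2r (Z ω) * φt (X ω) - wt (X ω)
            - b2r (A ω) / p (Z ω) (X ω)
              * (Y ω - b2r (Z ω) * φt (X ω) - e10t (X ω)))) :
    ∫ ω, (b2r (A ω) * (δt (X ω) - δm) + θt ω) ∂P = 0 := by
  classical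
  set c1 : Bool → Bool → 𝒳 → ℝ := fun a z x =>
    ρ x / (p true x - p false x) * ((2 * b2r z - 1) / π z x) * (1 - b2r a / p z x)
    with hc1
  set c0 : Bool → Bool → 𝒳 → ℝ := fun a z x =>
    b2r a * (δt x - δm) + ρ x / (p true x - p false x) * ((2 * b2r z - 1) / π z x) *
      (-(b2r a * δt x) - b2r z * φt x - wt x + b2r a / p z x * (b2r z * φt x + e10t x))
    with hc0
  have hg : ∀ ω, b2r (A ω) * (δt (X ω) - δm) + θt ω
      = c1 (A ω) (Z ω) (X ω) * Y ω + c0 (A ω) (Z ω) (X ω) := by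
    intro ω; rw [hθt, hc1, hc0]; ring
  -- measurability of basic sets
  have hSx : ∀ x : 𝒳, MeasurableSet {ω | X ω = x} := fun x => hX (measurableSet_singleton x)
  have hSz : ∀ z : Bool, MeasurableSet {ω | Z ω = z} := fun z => hZ (measurableSet_singleton z)
  have hSa : ∀ a : Bool, MeasurableSet {ω | A ω = a} := fun a => hA (measurableSet_singleton a)
  -- integrability
  have hVmeas : Measurable fun ω => (A ω, Z ω, X ω) := hA.prodMk (hZ.prodMk hX)
  have hint1 : Integrable (fun ω => c1 (A ω) (Z ω) (X ω) * Y ω) P := by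
    obtain ⟨C, hC⟩ := Finite.exists_le fun q : Bool × Bool × 𝒳 => ‖c1 q.1 q.2.1 q.2.2‖
    refine hYint.bdd_mul (c := C) ?_ ?_
    · exact ((measurable_of_countable fun q : Bool × Bool × 𝒳 =>
        c1 q.1 q.2.1 q.2.2).comp hVmeas).aestronglyMeasurable
    · exact ae_of_all _ fun ω => hC (A ω, Z ω, X ω)
  have hint2 : Integrable (fun ω => c0 (A ω) (Z ω) (X ω)) P :=
    integrable_comp_fin hVmeas fun q : Bool × Bool × 𝒳 => c0 q.1 q.2.1 q.2.2
  have hgint : Integrable (fun ω => b2r (A ω) * (δt (X ω) - δm) + θt ω) P :=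
    (hint1.add hint2).congr (ae_of_all _ fun ω => (hg ω).symm)
  -- nonzeroness
  have hmne : ∀ x, prb P {ω | X ω = x} ≠ 0 := fun x => (hXpos x).ne'
  have hπne : ∀ z x, π z x ≠ 0 := fun z x => (hπpos z x).1.ne'
  have hpne : ∀ z x, p z x ≠ 0 := fun z x => (hppos z x).1.ne'
  have hΔne : ∀ x, p true x - p false x ≠ 0 := fun x => sub_ne_zero.2 (hrel x)
  -- key partition of the integral
  have key : ∫ ω, (b2r (A ω) * (δt (X ω) - δm) + θt ω) ∂P
      = ∑ x : 𝒳, ∑ z : Bool, ∑ a : Bool,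
          ∫ ω in ({ω | X ω = x} ∩ {ω | Z ω = z}) ∩ {ω | A ω = a},
            (b2r (A ω) * (δt (X ω) - δm) + θt ω) ∂P := by
    rw [← setIntegral_univ, setIntegral_partition hX hgint MeasurableSet.univ]
    refine Finset.sum_congr rfl fun x _ => ?_
    rw [Set.univ_inter, setIntegral_partition hZ hgint (hSx x)]
    refine Finset.sum_congr rfl fun z _ => ?_
    rw [setIntegral_partition hA hgint ((hSx x).inter (hSz z))]
  -- evaluate each piece
  have hval : ∀ (x : 𝒳) (z a : Bool),
      ∫ ω in ({ω | X ω = x} ∩ {ω | Z ω = z}) ∩ {ω | A ω = a},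
          (b2r (A ω) * (δt (X ω) - δm) + θt ω) ∂P
      = c1 a z x * (∫ ω in ({ω | X ω = x} ∩ {ω | Z ω = z}) ∩ {ω | A ω = a}, Y ω ∂P)
        + c0 a z x * prb P (({ω | X ω = x} ∩ {ω | Z ω = z}) ∩ {ω | A ω = a}) := by
    intro x z a
    have hEmeas : MeasurableSet (({ω | X ω = x} ∩ {ω | Z ω = z}) ∩ {ω | A ω = a}) :=
      ((hSx x).inter (hSz z)).inter (hSa a)
    have h1 : Set.EqOn (fun ω => b2r (A ω) * (δt (X ω) - δm) + θt ω)
        (fun ω => c1 a z x * Y ω + c0 a z x)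
        (({ω | X ω = x} ∩ {ω | Z ω = z}) ∩ {ω | A ω = a}) := by
      intro ω hω
      obtain ⟨⟨hx, hz⟩, ha⟩ := hω
      simp only
      rw [hg ω, hx, hz, ha]
    rw [setIntegral_congr_fun hEmeas h1,
      integral_add ((hYint.integrableOn).const_mul _) (integrableOn_const (measure_lt_top P _).ne),
      integral_const_mul, setIntegral_const, smul_eq_mul, prb, Measure.real]
    ring
  rw [key]
  simp only [hval]
  -- per-x evaluation
  have perx : ∀ x : 𝒳,
      (∑ z : Bool, ∑ a : Bool,
        (c1 a z x * (∫ ω in ({ω | X ω = x} ∩ {ω | Z ω = z}) ∩ {ω | A ω = a}, Y ω ∂P)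
          + c0 a z x * prb P (({ω | X ω = x} ∩ {ω | Z ω = z}) ∩ {ω | A ω = a})))
      = prb P ({ω | X ω = x} ∩ {ω | A ω = true}) * (δs x - δm) := by
    intro x
    set m := prb P {ω | X ω = x} with hm
    -- P(Z=z, X=x)
    have hE2 : ∀ z, prb P ({ω | X ω = x} ∩ {ω | Z ω = z}) = π z x * m := by
      intro z
      have hset : {ω | Z ω = z} ∩ {ω | X ω = x} = {ω | X ω = x} ∩ {ω | Z ω = z} :=
        Set.inter_comm _ _
      rw [hπ z x, cprb, hset, ← hm, div_mul_cancel₀ _ (hmne x)]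
    have hE2ne : ∀ z, prb P ({ω | X ω = x} ∩ {ω | Z ω = z}) ≠ 0 := by
      intro z; rw [hE2]; exact mul_ne_zero (hπne z x) (hmne x)
    -- P(A=1, Z=z, X=x)
    have hsetZX : ∀ z, {ω | Z ω = z ∧ X ω = x} = {ω | X ω = x} ∩ {ω | Z ω = z} := by
      intro z; ext ω; exact and_comm
    have hsetAZX : ∀ z, {ω | A ω = true} ∩ ({ω | X ω = x} ∩ {ω | Z ω = z})
        = ({ω | X ω = x} ∩ {ω | Z ω = z}) ∩ {ω | A ω = true} := fun z => Set.inter_comm _ _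
    have hE3t : ∀ z, prb P (({ω | X ω = x} ∩ {ω | Z ω = z}) ∩ {ω | A ω = true})
        = p z x * (π z x * m) := by
      intro z
      have := hp z x
      rw [cprb, hsetZX z, hsetAZX z] at this
      rw [this, hE2, div_mul_cancel₀]
      rw [hE2] at *
      exact mul_ne_zero (hπne z x) (hmne x)
    have hE3tne : ∀ z, prb P (({ω | X ω = x} ∩ {ω | Z ω = z}) ∩ {ω | A ω = true}) ≠ 0 := by
      intro z; rw [hE3t]; exact mul_ne_zero (hpne z x) (mul_ne_zero (hπne z x) (hmne x))
    -- P(A=0, Z=z, X=x)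
    have hE3f : ∀ z, prb P (({ω | X ω = x} ∩ {ω | Z ω = z}) ∩ {ω | A ω = false})
        = π z x * m - p z x * (π z x * m) := by
      intro z
      have hpart := prb_partition (P := P) hA ((hSx x).inter (hSz z))
      rw [Fintype.sum_bool] at hpart
      have := hE2 z
      have := hE3t z
      linarith
    -- integrals of Y
    have hIt : ∀ z, (∫ ω in ({ω | X ω = x} ∩ {ω | Z ω = z}) ∩ {ω | A ω = true}, Y ω ∂P)
        = e1z z x * (p z x * (π z x * m)) := by
      intro z
      have hset : {ω | A ω = true ∧ Z ω = z ∧ X ω = x}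
          = ({ω | X ω = x} ∩ {ω | Z ω = z}) ∩ {ω | A ω = true} := by
        ext ω
        simp only [Set.mem_setOf_eq, Set.mem_inter_iff]
        tauto
      have := he1z z x
      rw [cex, hset, hE3t z] at this
      rw [this, div_mul_cancel₀]
      exact mul_ne_zero (hpne z x) (mul_ne_zero (hπne z x) (hmne x))
    have hIE2 : ∀ z, (∫ ω in {ω | X ω = x} ∩ {ω | Z ω = z}, Y ω ∂P) = e z x * (π z x * m) := by
      intro z
      have := he z x
      rw [cex, hsetZX z, hE2 z] at this
      rw [this, div_mul_cancel₀]
      exact mul_ne_zero (hπne z x) (hmne x)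
    have hIf : ∀ z, (∫ ω in ({ω | X ω = x} ∩ {ω | Z ω = z}) ∩ {ω | A ω = false}, Y ω ∂P)
        = e z x * (π z x * m) - e1z z x * (p z x * (π z x * m)) := by
      intro z
      have hpart := setIntegral_partition (P := P) hA hYint ((hSx x).inter (hSz z))
      rw [Fintype.sum_bool] at hpart
      have := hIE2 z
      have := hIt z
      linarith
    -- P(A=1, X=x) and ρ
    have hAx : prb P ({ω | X ω = x} ∩ {ω | A ω = true})
        = p true x * (π true x * m) + p false x * (π false x * m) := by
      have hpart := prb_partition (P := P) hZ ((hSx x).inter (hSa true))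
      rw [Fintype.sum_bool] at hpart
      have hs1 : ({ω | X ω = x} ∩ {ω | A ω = true}) ∩ {ω | Z ω = true}
          = ({ω | X ω = x} ∩ {ω | Z ω = true}) ∩ {ω | A ω = true} := by
        ext ω; simp only [Set.mem_inter_iff, Set.mem_setOf_eq]; tauto
      have hs0 : ({ω | X ω = x} ∩ {ω | A ω = true}) ∩ {ω | Z ω = false}
          = ({ω | X ω = x} ∩ {ω | Z ω = false}) ∩ {ω | A ω = true} := by
        ext ω; simp only [Set.mem_inter_iff, Set.mem_setOf_eq]; tauto
      rw [hs1, hs0, hE3t true, hE3t false] at hpart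
      exact hpart
    have hρx : ρ x = (p true x * (π true x * m) + p false x * (π false x * m)) / m := by
      have hset : {ω | A ω = true} ∩ {ω | X ω = x} = {ω | X ω = x} ∩ {ω | A ω = true} :=
        Set.inter_comm _ _
      rw [hρ x, cprb, hset, hAx, ← hm]
    -- now pure algebra
    rw [Fintype.sum_bool]
    rw [Fintype.sum_bool, Fintype.sum_bool]
    rw [hIt true, hIt false, hIf true, hIf false, hE3t true, hE3t false, hE3f true,
      hE3f false, hAx, hc1, hc0]
    have hbt : b2r true = 1 := rfl
    have hbf : b2r false = 0 := rfl
    simp only [hbt, hbf]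
    rw [hρx, hδs x, hφ x, hφt x]
    have hq1 : p true x ≠ 0 := hpne true x
    have hq0 : p false x ≠ 0 := hpne false x
    have hP1 : π true x ≠ 0 := hπne true x
    have hP0 : π false x ≠ 0 := hπne false x
    have hD : p true x - p false x ≠ 0 := hΔne x
    have hm' : m ≠ 0 := hmne x
    field_simp
    ring
  rw [Finset.sum_congr rfl fun x _ => perx x]
  -- final step
  have hAne : prb P {ω | A ω = true} ≠ 0 := hApos.ne'
  have hsetAX : ∀ x : 𝒳, {ω | A ω = true} ∩ {ω | X ω = x}
      = {ω | X ω = x} ∩ {ω | A ω = true} := fun x => Set.inter_comm _ _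
  have hAsum : prb P {ω | A ω = true} = ∑ x : 𝒳, prb P ({ω | X ω = x} ∩ {ω | A ω = true}) := by
    have := prb_partition (P := P) hX (hSa true)
    simp_rw [hsetAX] at this
    exact this
  have hδsum : (∫ ω in {ω | A ω = true}, δs (X ω) ∂P)
      = ∑ x : 𝒳, δs x * prb P ({ω | X ω = x} ∩ {ω | A ω = true}) := by
    have hδint : Integrable (fun ω => δs (X ω)) P := integrable_comp_fin hX δs
    rw [setIntegral_partition hX hδint (hSa true)]
    refine Finset.sum_congr rfl fun x _ => ?_
    have hseteq : {ω | A ω = true} ∩ {ω | X ω = x} = {ω | X ω = x} ∩ {ω | A ω = true} :=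
      Set.inter_comm _ _
    rw [hseteq]
    have hEm : MeasurableSet ({ω | X ω = x} ∩ {ω | A ω = true}) := (hSx x).inter (hSa true)
    have h1 : Set.EqOn (fun ω => δs (X ω)) (fun _ => δs x)
        ({ω | X ω = x} ∩ {ω | A ω = true}) := by
      intro ω hω; simp only; rw [hω.1]
    rw [setIntegral_congr_fun hEm h1, setIntegral_const, smul_eq_mul, mul_comm, prb, Measure.real]
  have hδm' : δm * prb P {ω | A ω = true}
      = ∑ x : 𝒳, δs x * prb P ({ω | X ω = x} ∩ {ω | A ω = true}) := by
    rw [hδm, cex, hδsum, div_mul_cancel₀ _ hAne]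
  calc ∑ x : 𝒳, prb P ({ω | X ω = x} ∩ {ω | A ω = true}) * (δs x - δm)
      = (∑ x : 𝒳, δs x * prb P ({ω | X ω = x} ∩ {ω | A ω = true}))
        - δm * ∑ x : 𝒳, prb P ({ω | X ω = x} ∩ {ω | A ω = true}) := by
        rw [Finset.mul_sum, ← Finset.sum_sub_distrib]
        exact Finset.sum_congr rfl fun x _ => by ring
    _ = 0 := by rw [← hAsum, ← hδm']; ring
end

section
/- (Multiple robustness, model M3.) Let the nuisances δ*, φ, e_{10} and the instrument propensity π_z be evaluated at their true values, and let p̃_z be arbitrary functions on 𝒳 with values in (0,1) satisfying p̃_1(x)≠p̃_0(x), let w̃ be an arbitrary bounded function on 𝒳, and let ρ̃ be an arbitrary bounded function on 𝒳. Define θ̃(O) = [ρ̃(X)/(p̃_1(X)−p̃_0(X))]·[(2Z−1)/π_Z(X)]·{Y − Aδ*(X) − Zφ(X) − w̃(X) − (A/p̃_Z(X))·(Y − Zφ(X) − e_{10}(X))}. Then E[A(δ*(X) − δ*_m) + θ̃(O)] = 0. -/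
open MeasureTheory

lemma master {Ω κ : Type*} [MeasurableSpace Ω] [Fintype κ] [MeasurableSpace κ]
    [MeasurableSingletonClass κ]
    (P : Measure Ω) [IsProbabilityMeasure P]
    {T : Ω → κ} (hT : Measurable T) {Y : Ω → ℝ} (hYint : Integrable Y P)
    (g h : κ → ℝ) (F : Ω → ℝ) (hF : ∀ ω, F ω = g (T ω) * Y ω + h (T ω)) :
    ∫ ω, F ω ∂P
      = ∑ t : κ, (g t * ∫ ω in {ω | T ω = t}, Y ω ∂P + h t * (P {ω | T ω = t}).toReal) := by
  have hcell : ∀ t : κ, MeasurableSet {ω | T ω = t} := fun t => hT (measurableSet_singleton t)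
  have hInt : ∀ t : κ, IntegrableOn (fun ω => g t * Y ω + h t) {ω | T ω = t} P := fun t =>
    (hYint.integrableOn.const_mul (g t)).add (integrableOn_const (measure_ne_top _ _))
  have hEq : ∀ t : κ, Set.EqOn F (fun ω => g t * Y ω + h t) {ω | T ω = t} := by
    intro t ω hω
    simp only [Set.mem_setOf_eq] at hω
    rw [hF, hω]
  have hunion : (⋃ t : κ, {ω | T ω = t}) = Set.univ := by
    ext ω; simp
  have hdisj : Pairwise (Function.onFun Disjoint (fun t : κ => {ω | T ω = t})) := by
    intro i j hij
    refine Set.disjoint_left.mpr fun ω h1 h2 => hij ?_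
    simp only [Set.mem_setOf_eq] at h1 h2
    rw [← h1, ← h2]
  calc ∫ ω, F ω ∂P = ∫ ω in Set.univ, F ω ∂P := setIntegral_univ.symm
    _ = ∫ ω in ⋃ t : κ, {ω | T ω = t}, F ω ∂P := by rw [hunion]
    _ = ∑ t : κ, ∫ ω in {ω | T ω = t}, F ω ∂P := by
        exact integral_iUnion_fintype hcell hdisj
          (fun t => ((hInt t).congr_fun (hEq t).symm (hcell t)))
    _ = ∑ t : κ, (g t * ∫ ω in {ω | T ω = t}, Y ω ∂P + h t * (P {ω | T ω = t}).toReal) := by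
        refine Finset.sum_congr rfl fun t _ => ?_
        rw [setIntegral_congr_fun (hcell t) (hEq t),
          integral_add (hYint.integrableOn.const_mul (g t))
            (integrableOn_const (measure_ne_top _ _)),
          MeasureTheory.integral_const_mul, setIntegral_const, smul_eq_mul, measureReal_def]
        ring

set_option maxHeartbeats 2000000 in
/-- Multiple robustness, model M3: with the true `δ*`, `φ`, `e₁₀`
and instrument propensity `π_z`, arbitrary `p̃_z ∈ (0,1)` with `p̃₁ ≠ p̃₀`, an
arbitrary bounded `w̃` and an arbitrary bounded `ρ̃`, the plug-in influence
function remains an unbiased moment equation for `δ*_m`. -/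
theorem multiple_robustness_M3
    {Ω 𝒳 : Type*} [MeasurableSpace Ω]
    [Fintype 𝒳] [MeasurableSpace 𝒳] [MeasurableSingletonClass 𝒳]
    (P : Measure Ω) [IsProbabilityMeasure P]
    (Y : Ω → ℝ) (A Z : Ω → Bool) (X : Ω → 𝒳)
    (hY : Measurable Y) (hA : Measurable A) (hZ : Measurable Z) (hX : Measurable X)
    (hYint : Integrable Y P)
    -- positivity
    (hXpos : ∀ x, 0 < prb P {ω | X ω = x})
    (hApos : 0 < prb P {ω | A ω = true})
    -- nuisance functions
    (p π : Bool → 𝒳 → ℝ)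
    (hp : ∀ z x, p z x = cprb P {ω | A ω = true} {ω | Z ω = z ∧ X ω = x})
    (hπ : ∀ z x, π z x = cprb P {ω | Z ω = z} {ω | X ω = x})
    (hppos : ∀ z x, 0 < p z x ∧ p z x < 1)
    (hπpos : ∀ z x, 0 < π z x ∧ π z x < 1)
    -- relevance
    (hrel : ∀ x, p true x ≠ p false x)
    (e : Bool → 𝒳 → ℝ)
    (he : ∀ z x, e z x = cex P Y {ω | Z ω = z ∧ X ω = x})
    (e1z : Bool → 𝒳 → ℝ)
    (he1z : ∀ z x, e1z z x = cex P Y {ω | A ω = true ∧ Z ω = z ∧ X ω = x})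
    (φ : 𝒳 → ℝ) (hφ : ∀ x, φ x = e1z true x - e1z false x)
    (δs : 𝒳 → ℝ)
    (hδs : ∀ x, δs x = (e true x - e false x) / (p true x - p false x)
      - φ x / (p true x - p false x))
    (δm : ℝ) (hδm : δm = cex P (fun ω => δs (X ω)) {ω | A ω = true})
    -- arbitrary treatment propensity p̃_z
    (pt : Bool → 𝒳 → ℝ)
    (hptr : ∀ z x, 0 < pt z x ∧ pt z x < 1)
    (hptrel : ∀ x, pt true x ≠ pt false x)
    -- arbitrary bounded w̃ and ρ̃
    (wt ρt : 𝒳 → ℝ)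
    (hwtbd : ∃ C : ℝ, ∀ x, |wt x| ≤ C)
    (hρtbd : ∃ C : ℝ, ∀ x, |ρt x| ≤ C)
    (θt : Ω → ℝ)
    (hθt : ∀ ω, θt ω =
      ρt (X ω) / (pt true (X ω) - pt false (X ω))
        * ((2 * b2r (Z ω) - 1) / π (Z ω) (X ω))
        * (Y ω - b2r (A ω) * δs (X ω) - b2r (Z ω) * φ (X ω) - wt (X ω)
            - b2r (A ω) / pt (Z ω) (X ω)
              * (Y ω - b2r (Z ω) * φ (X ω) - e1z false (X ω)))) :
    ∫ ω, (b2r (A ω) * (δs (X ω) - δm) + θt ω) ∂P = 0 := by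
  classical
  set T : Ω → Bool × Bool × 𝒳 := fun ω => (A ω, Z ω, X ω) with hTdef
  have hTm : Measurable T := hA.prodMk (hZ.prodMk hX)
  -- cell description
  have hcellset : ∀ a z x, {ω | T ω = (a, z, x)} = {ω | A ω = a ∧ Z ω = z ∧ X ω = x} := by
    intro a z x; ext ω; simp [hTdef, Prod.ext_iff]
  set G : Bool × Bool × 𝒳 → ℝ := fun t =>
    ρt t.2.2 / (pt true t.2.2 - pt false t.2.2) * ((2 * b2r t.2.1 - 1) / π t.2.1 t.2.2)
      * (1 - b2r t.1 / pt t.2.1 t.2.2) with hGdef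
  set Hθ : Bool × Bool × 𝒳 → ℝ := fun t =>
    ρt t.2.2 / (pt true t.2.2 - pt false t.2.2) * ((2 * b2r t.2.1 - 1) / π t.2.1 t.2.2)
      * (- (b2r t.1 * δs t.2.2) - b2r t.2.1 * φ t.2.2 - wt t.2.2
          + b2r t.1 / pt t.2.1 t.2.2 * (b2r t.2.1 * φ t.2.2 + e1z false t.2.2)) with hHθdef
  set YI : Bool × Bool × 𝒳 → ℝ := fun t => ∫ ω in {ω | T ω = t}, Y ω ∂P with hYIdef
  set PP : Bool × Bool × 𝒳 → ℝ := fun t => (P {ω | T ω = t}).toReal with hPPdef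
  have hmain : ∫ ω, (b2r (A ω) * (δs (X ω) - δm) + θt ω) ∂P
      = ∑ t, (G t * YI t + (b2r t.1 * (δs t.2.2 - δm) + Hθ t) * PP t) := by
    refine master P hTm hYint G (fun t => b2r t.1 * (δs t.2.2 - δm) + Hθ t) _ ?_
    intro ω
    rw [hθt]
    simp only [hGdef, hHθdef, hTdef]
    ring
  -- the A-март part
  have hAmeas : MeasurableSet {ω | A ω = true} := hA (measurableSet_singleton true)
  have hprbA : ∑ t : Bool × Bool × 𝒳, b2r t.1 * PP t = prb P {ω | A ω = true} := by
    have h1 : ∫ ω, b2r (A ω) ∂P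
        = ∑ t : Bool × Bool × 𝒳, ((0:ℝ) * YI t + b2r t.1 * PP t) :=
      master P hTm hYint (fun _ => 0) (fun t => b2r t.1) _ (by intro ω; simp [hTdef])
    have h2 : ∫ ω, b2r (A ω) ∂P = prb P {ω | A ω = true} := by
      have : (fun ω => b2r (A ω))
          = Set.indicator {ω | A ω = true} (fun _ => (1:ℝ)) := by
        funext ω
        by_cases h : A ω = true <;> simp [b2r, h, Set.indicator_apply]
      rw [this, integral_indicator hAmeas, setIntegral_const, smul_eq_mul, mul_one]
      rfl
    simp only [zero_mul, zero_add] at h1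
    rw [← h1, h2]
  have hδsint : ∑ t : Bool × Bool × 𝒳, (b2r t.1 * δs t.2.2) * PP t
      = ∫ ω in {ω | A ω = true}, δs (X ω) ∂P := by
    have h1 : ∫ ω, b2r (A ω) * δs (X ω) ∂P
        = ∑ t : Bool × Bool × 𝒳, ((0:ℝ) * YI t + (b2r t.1 * δs t.2.2) * PP t) :=
      master P hTm hYint (fun _ => 0) (fun t => b2r t.1 * δs t.2.2) _ (by intro ω; simp [hTdef])
    have h2 : ∫ ω, b2r (A ω) * δs (X ω) ∂P = ∫ ω in {ω | A ω = true}, δs (X ω) ∂P := by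
      have : (fun ω => b2r (A ω) * δs (X ω))
          = Set.indicator {ω | A ω = true} (fun ω => δs (X ω)) := by
        funext ω
        by_cases h : A ω = true <;> simp [b2r, h, Set.indicator_apply]
      rw [this, integral_indicator hAmeas]
    simp only [zero_mul, zero_add] at h1
    rw [← h1, h2]
  have hA0 : ∑ t : Bool × Bool × 𝒳, (b2r t.1 * (δs t.2.2 - δm)) * PP t = 0 := by
    have hsplit : ∑ t : Bool × Bool × 𝒳, (b2r t.1 * (δs t.2.2 - δm)) * PP t
        = (∑ t : Bool × Bool × 𝒳, (b2r t.1 * δs t.2.2) * PP t)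
          - δm * ∑ t : Bool × Bool × 𝒳, b2r t.1 * PP t := by
      rw [Finset.mul_sum, ← Finset.sum_sub_distrib]
      exact Finset.sum_congr rfl fun t _ => by ring
    have hδm' : ∫ ω in {ω | A ω = true}, δs (X ω) ∂P = δm * prb P {ω | A ω = true} := by
      rw [hδm, cex]
      field_simp
    rw [hsplit, hδsint, hprbA, hδm']
    ring
  -- the θ part
  have hθ0 : ∑ t : Bool × Bool × 𝒳, (G t * YI t + Hθ t * PP t) = 0 := by
    have hreindex : ∑ t : Bool × Bool × 𝒳, (G t * YI t + Hθ t * PP t)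
        = ∑ x : 𝒳, ∑ a : Bool, ∑ z : Bool,
            (G (a, z, x) * YI (a, z, x) + Hθ (a, z, x) * PP (a, z, x)) := by
      rw [Fintype.sum_prod_type]
      rw [show (∑ a : Bool, ∑ q : Bool × 𝒳,
          (G (a, q) * YI (a, q) + Hθ (a, q) * PP (a, q)))
        = ∑ a : Bool, ∑ z : Bool, ∑ x : 𝒳,
          (G (a, z, x) * YI (a, z, x) + Hθ (a, z, x) * PP (a, z, x)) from
        Finset.sum_congr rfl fun a _ => Fintype.sum_prod_type _]
      rw [show (∑ a : Bool, ∑ z : Bool, ∑ x : 𝒳,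
          (G (a, z, x) * YI (a, z, x) + Hθ (a, z, x) * PP (a, z, x)))
        = ∑ a : Bool, ∑ x : 𝒳, ∑ z : Bool,
          (G (a, z, x) * YI (a, z, x) + Hθ (a, z, x) * PP (a, z, x)) from
        Finset.sum_congr rfl fun a _ => Finset.sum_comm]
      exact Finset.sum_comm
    rw [hreindex]
    refine Finset.sum_eq_zero fun x _ => ?_
    -- per-x facts
    have hPxne : prb P {ω | X ω = x} ≠ 0 := ne_of_gt (hXpos x)
    have hmeas3 : ∀ a z : Bool, MeasurableSet {ω | A ω = a ∧ Z ω = z ∧ X ω = x} := by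
      intro a z
      rw [← hcellset]
      exact hTm (measurableSet_singleton _)
    have hinter1 : ∀ z : Bool, {ω | Z ω = z} ∩ {ω | X ω = x} = {ω | Z ω = z ∧ X ω = x} := by
      intro z; ext ω; simp [Set.mem_setOf_eq]
    have hinter2 : ∀ z : Bool, {ω | A ω = true} ∩ {ω | Z ω = z ∧ X ω = x}
        = {ω | A ω = true ∧ Z ω = z ∧ X ω = x} := by
      intro z; ext ω; simp [Set.mem_setOf_eq, and_assoc]
    have hPz : ∀ z : Bool, prb P {ω | Z ω = z ∧ X ω = x} = π z x * prb P {ω | X ω = x} := by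
      intro z
      have := hπ z x
      rw [cprb, hinter1] at this
      rw [this]
      field_simp
    have hPzpos : ∀ z : Bool, 0 < prb P {ω | Z ω = z ∧ X ω = x} := by
      intro z
      rw [hPz]
      exact mul_pos (hπpos z x).1 (hXpos x)
    have hPzne : ∀ z : Bool, prb P {ω | Z ω = z ∧ X ω = x} ≠ 0 := fun z => ne_of_gt (hPzpos z)
    have hQ : ∀ z : Bool, prb P {ω | A ω = true ∧ Z ω = z ∧ X ω = x}
        = p z x * prb P {ω | Z ω = z ∧ X ω = x} := by
      intro z
      have := hp z x
      rw [cprb, hinter2] at this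
      rw [this]
      field_simp [hPzne z]
    have hQne : ∀ z : Bool, prb P {ω | A ω = true ∧ Z ω = z ∧ X ω = x} ≠ 0 := by
      intro z
      rw [hQ]
      exact ne_of_gt (mul_pos (hppos z x).1 (hPzpos z))
    have hI : ∀ z : Bool, ∫ ω in {ω | Z ω = z ∧ X ω = x}, Y ω ∂P
        = e z x * prb P {ω | Z ω = z ∧ X ω = x} := by
      intro z
      rw [he z x, cex]
      field_simp [hPzne z]
    have hJ : ∀ z : Bool, ∫ ω in {ω | A ω = true ∧ Z ω = z ∧ X ω = x}, Y ω ∂P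
        = e1z z x * prb P {ω | A ω = true ∧ Z ω = z ∧ X ω = x} := by
      intro z
      rw [he1z z x, cex]
      field_simp [hQne z]
    have hsetsplit : ∀ z : Bool, {ω | Z ω = z ∧ X ω = x}
        = {ω | A ω = true ∧ Z ω = z ∧ X ω = x} ∪ {ω | A ω = false ∧ Z ω = z ∧ X ω = x} := by
      intro z; ext ω; cases hAa : A ω <;> simp [Set.mem_setOf_eq, hAa]
    have hdisj2 : ∀ z : Bool, Disjoint {ω | A ω = true ∧ Z ω = z ∧ X ω = x}
        {ω | A ω = false ∧ Z ω = z ∧ X ω = x} := by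
      intro z
      refine Set.disjoint_left.mpr fun ω h1 h2 => ?_
      simp only [Set.mem_setOf_eq] at h1 h2
      rw [h1.1] at h2
      exact Bool.noConfusion h2.1
    have hPPT : ∀ z : Bool, PP (true, z, x) = prb P {ω | A ω = true ∧ Z ω = z ∧ X ω = x} := by
      intro z
      rw [hPPdef]
      simp only
      rw [hcellset]
      rfl
    have hYIT : ∀ z : Bool, YI (true, z, x)
        = ∫ ω in {ω | A ω = true ∧ Z ω = z ∧ X ω = x}, Y ω ∂P := by
      intro z
      rw [hYIdef]
      simp only
      rw [hcellset]
    have hPPF : ∀ z : Bool, PP (false, z, x)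
        = prb P {ω | Z ω = z ∧ X ω = x} - prb P {ω | A ω = true ∧ Z ω = z ∧ X ω = x} := by
      intro z
      have hmu : P {ω | Z ω = z ∧ X ω = x}
          = P {ω | A ω = true ∧ Z ω = z ∧ X ω = x} + P {ω | A ω = false ∧ Z ω = z ∧ X ω = x} := by
        rw [hsetsplit z]
        exact measure_union (hdisj2 z) (hmeas3 false z)
      have : prb P {ω | Z ω = z ∧ X ω = x}
          = prb P {ω | A ω = true ∧ Z ω = z ∧ X ω = x}
            + prb P {ω | A ω = false ∧ Z ω = z ∧ X ω = x} := by
        rw [prb, prb, prb, hmu, ENNReal.toReal_add (measure_ne_top P _) (measure_ne_top P _)]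
      rw [hPPdef]
      simp only
      rw [hcellset]
      show prb P _ = _
      rw [this]
      ring
    have hYIF : ∀ z : Bool, YI (false, z, x)
        = (∫ ω in {ω | Z ω = z ∧ X ω = x}, Y ω ∂P)
          - ∫ ω in {ω | A ω = true ∧ Z ω = z ∧ X ω = x}, Y ω ∂P := by
      intro z
      have : ∫ ω in {ω | Z ω = z ∧ X ω = x}, Y ω ∂P
          = (∫ ω in {ω | A ω = true ∧ Z ω = z ∧ X ω = x}, Y ω ∂P)
            + ∫ ω in {ω | A ω = false ∧ Z ω = z ∧ X ω = x}, Y ω ∂P := by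
        rw [hsetsplit z]
        exact setIntegral_union (hdisj2 z) (hmeas3 false z)
          hYint.integrableOn hYint.integrableOn
      rw [hYIdef]
      simp only
      rw [hcellset, this]
      ring
    -- now pure algebra
    have hπ1 : π true x ≠ 0 := ne_of_gt (hπpos true x).1
    have hπ0 : π false x ≠ 0 := ne_of_gt (hπpos false x).1
    have hq1 : pt true x ≠ 0 := ne_of_gt (hptr true x).1
    have hq0 : pt false x ≠ 0 := ne_of_gt (hptr false x).1
    have hptd : pt true x - pt false x ≠ 0 := sub_ne_zero.mpr (hptrel x)
    have hpd : p true x - p false x ≠ 0 := sub_ne_zero.mpr (hrel x)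
    simp only [Fintype.sum_bool, hGdef, hHθdef]
    rw [hYIT true, hYIT false, hPPT true, hPPT false, hYIF true, hYIF false,
      hPPF true, hPPF false, hJ true, hJ false, hQ true, hQ false, hI true, hI false,
      hPz true, hPz false, hδs x, hφ x]
    simp only [b2r, if_true, if_false, Bool.false_eq_true]
    field_simp
    ring
  -- assemble
  have hm2 : ∑ t : Bool × Bool × 𝒳, (G t * YI t + (b2r t.1 * (δs t.2.2 - δm) + Hθ t) * PP t)
      = (∑ t : Bool × Bool × 𝒳, (b2r t.1 * (δs t.2.2 - δm)) * PP t)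
        + ∑ t : Bool × Bool × 𝒳, (G t * YI t + Hθ t * PP t) := by
    rw [← Finset.sum_add_distrib]
    exact Finset.sum_congr rfl fun t _ => by ring
  rw [hmain, hm2, hA0, hθ0]
  norm_num
end

section
/- (Collider-bias elimination under the AND-gate rule.) Suppose treatment uptake follows the AND-gate rule A = Z_g(Z,ε_m)·U_g(U,ε_t), where ε_m and ε_t are independent of each other, (ε_m,ε_t) is independent of (Z,U), and additionally Z is independent of U. If P(A=1)>0, then U and Z are conditionally independent given the event {A=1}: P(U=u, Z=z | A=1) = P(U=u | A=1)·P(Z=z | A=1) for all (u,z). -/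
open MeasureTheory

lemma prob_decomp_aux {Ω γ : Type*} [MeasurableSpace Ω] [Fintype γ]
    [MeasurableSpace γ] [MeasurableSingletonClass γ]
    (P : Measure Ω) (f : Ω → γ) (hf : Measurable f) (s : Set Ω) (hs : MeasurableSet s) :
    P s = ∑ c : γ, P (s ∩ f ⁻¹' {c}) := by
  have hcov : s = ⋃ c : γ, s ∩ f ⁻¹' {c} := by
    ext ω; simp
  have hdisj : Pairwise (Function.onFun Disjoint fun c : γ => s ∩ f ⁻¹' {c}) := by
    intro i j hij
    refine Set.disjoint_left.2 ?_
    rintro ω ⟨-, h1⟩ ⟨-, h2⟩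
    exact hij (h1.symm.trans h2)
  calc P s = P (⋃ c : γ, s ∩ f ⁻¹' {c}) := by rw [← hcov]
    _ = ∑' c : γ, P (s ∩ f ⁻¹' {c}) :=
        measure_iUnion hdisj fun c => hs.inter (hf (measurableSet_singleton c))
    _ = ∑ c : γ, P (s ∩ f ⁻¹' {c}) := tsum_fintype _

/-- Collider-bias elimination under the AND-gate rule: if
`A = Z_g(Z,ε_m)·U_g(U,ε_t)` with `ε_m ⫫ ε_t`, `(ε_m,ε_t) ⫫ (Z,U)`, `Z ⫫ U`, and
`P(A=1) > 0`, then `U` and `Z` are conditionally independent given `{A=1}`. -/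
theorem and_gate_collider_bias_elimination
    {Ω 𝒵 𝒰 Em Et : Type*} [MeasurableSpace Ω]
    [MeasurableSpace Em] [MeasurableSpace Et]
    [Fintype 𝒵] [MeasurableSpace 𝒵] [MeasurableSingletonClass 𝒵]
    [Fintype 𝒰] [MeasurableSpace 𝒰] [MeasurableSingletonClass 𝒰]
    (P : Measure Ω) [IsProbabilityMeasure P]
    (Z : Ω → 𝒵) (U : Ω → 𝒰) (εm : Ω → Em) (εt : Ω → Et)
    (Zg : 𝒵 → Em → Bool) (Ug : 𝒰 → Et → Bool)
    (hZ : Measurable Z) (hU : Measurable U)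
    (hεm : Measurable εm) (hεt : Measurable εt)
    (hZg : ∀ z, Measurable (Zg z)) (hUg : ∀ u, Measurable (Ug u))
    -- AND-gate treatment uptake
    (A : Ω → Bool) (hAdef : ∀ ω, A ω = (Zg (Z ω) (εm ω) && Ug (U ω) (εt ω)))
    -- ε_m ⫫ ε_t
    (hindep_eps : ProbabilityTheory.IndepFun εm εt P)
    -- (ε_m, ε_t) ⫫ (Z, U)
    (hindep : ProbabilityTheory.IndepFun (fun ω => (εm ω, εt ω)) (fun ω => (Z ω, U ω)) P)
    -- Z ⫫ U
    (hZU : ProbabilityTheory.IndepFun Z U P)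
    -- positivity
    (hpos : ∀ z u, 0 < prb P {ω | Z ω = z ∧ U ω = u})
    (hApos : 0 < prb P {ω | A ω = true}) :
    ∀ (u : 𝒰) (z : 𝒵),
      cprb P ({ω | U ω = u} ∩ {ω | Z ω = z}) {ω | A ω = true}
        = cprb P {ω | U ω = u} {ω | A ω = true}
          * cprb P {ω | Z ω = z} {ω | A ω = true} := by
  classical
  intro u z
  set A1 : Set Ω := {ω | A ω = true} with hA1def
  set ZU : Ω → 𝒵 × 𝒰 := fun ω => (Z ω, U ω) with hZUdef
  have hZUm : Measurable ZU := hZ.prodMk hU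
  -- measurability of A = 1
  have hm1 : Measurable fun ω => Zg (Z ω) (εm ω) := by
    have h : Measurable fun pr : Em × 𝒵 => Zg pr.2 pr.1 :=
      measurable_from_prod_countable_left fun z' => hZg z'
    exact h.comp (hεm.prodMk hZ)
  have hm2 : Measurable fun ω => Ug (U ω) (εt ω) := by
    have h : Measurable fun pr : Et × 𝒰 => Ug pr.2 pr.1 :=
      measurable_from_prod_countable_left fun u' => hUg u'
    exact h.comp (hεt.prodMk hU)
  have hA1eq : A1 = {ω | Zg (Z ω) (εm ω) = true} ∩ {ω | Ug (U ω) (εt ω) = true} := by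
    ext ω
    simp only [hA1def, Set.mem_setOf_eq, Set.mem_inter_iff, hAdef, Bool.and_eq_true]
  have hA1m : MeasurableSet A1 := by
    rw [hA1eq]
    exact (hm1 (measurableSet_singleton true)).inter (hm2 (measurableSet_singleton true))
  -- key factorization
  have key : ∀ (z' : 𝒵) (u' : 𝒰),
      P (A1 ∩ ZU ⁻¹' {(z', u')})
        = (P (εm ⁻¹' (Zg z' ⁻¹' {true})) * P (εt ⁻¹' (Ug u' ⁻¹' {true})))
          * (P (Z ⁻¹' {z'}) * P (U ⁻¹' {u'})) := by
    intro z' u'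
    have hset : A1 ∩ ZU ⁻¹' {(z', u')}
        = ((fun ω => (εm ω, εt ω)) ⁻¹' ((Zg z' ⁻¹' {true}) ×ˢ (Ug u' ⁻¹' {true})))
          ∩ ZU ⁻¹' {(z', u')} := by
      ext ω
      simp only [hA1def, hZUdef, Set.mem_inter_iff, Set.mem_preimage, Set.mem_singleton_iff,
        Set.mem_prod, Set.mem_setOf_eq, Prod.mk.injEq, hAdef, Bool.and_eq_true]
      constructor
      · rintro ⟨h, rfl, rfl⟩; exact ⟨h, rfl, rfl⟩
      · rintro ⟨h, rfl, rfl⟩; exact ⟨h, rfl, rfl⟩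
    have hsing : ({(z', u')} : Set (𝒵 × 𝒰)) = {z'} ×ˢ {u'} := by
      rw [Set.singleton_prod_singleton]
    rw [hset, hindep.measure_inter_preimage_eq_mul _ _
      (((hZg z') (measurableSet_singleton true)).prod ((hUg u') (measurableSet_singleton true)))
      (measurableSet_singleton ((z', u') : 𝒵 × 𝒰))]
    have h1 : (fun ω => (εm ω, εt ω)) ⁻¹' ((Zg z' ⁻¹' {true}) ×ˢ (Ug u' ⁻¹' {true}))
        = εm ⁻¹' (Zg z' ⁻¹' {true}) ∩ εt ⁻¹' (Ug u' ⁻¹' {true}) := by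
      ext ω; simp
    have h2 : ZU ⁻¹' {(z', u')} = Z ⁻¹' {z'} ∩ U ⁻¹' {u'} := by
      ext ω; simp [hZUdef, Prod.ext_iff]
    rw [h1, h2,
      hindep_eps.measure_inter_preimage_eq_mul _ _ ((hZg z') (measurableSet_singleton true))
        ((hUg u') (measurableSet_singleton true)),
      hZU.measure_inter_preimage_eq_mul _ _ (measurableSet_singleton z')
        (measurableSet_singleton u')]
  -- real-valued quantities
  set a : 𝒵 → ℝ := fun z' => (P (εm ⁻¹' (Zg z' ⁻¹' {true}))).toReal with hadef
  set b : 𝒰 → ℝ := fun u' => (P (εt ⁻¹' (Ug u' ⁻¹' {true}))).toReal with hbdef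
  set p : 𝒵 → ℝ := fun z' => (P (Z ⁻¹' {z'})).toReal with hpdef
  set q : 𝒰 → ℝ := fun u' => (P (U ⁻¹' {u'})).toReal with hqdef
  have keyR : ∀ (z' : 𝒵) (u' : 𝒰),
      (P (A1 ∩ ZU ⁻¹' {(z', u')})).toReal = (a z' * p z') * (b u' * q u') := by
    intro z' u'
    rw [key z' u', ENNReal.toReal_mul, ENNReal.toReal_mul, ENNReal.toReal_mul]
    ring
  set F : ℝ := ∑ z' : 𝒵, a z' * p z' with hFdef
  set G : ℝ := ∑ u' : 𝒰, b u' * q u' with hGdef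
  -- P(A1)
  have hPA : (P A1).toReal = F * G := by
    rw [prob_decomp_aux P ZU hZUm A1 hA1m,
      ENNReal.toReal_sum (fun c _ => measure_ne_top P _)]
    rw [Fintype.sum_prod_type, hFdef, hGdef, Finset.sum_mul_sum]
    exact Finset.sum_congr rfl fun z' _ => Finset.sum_congr rfl fun u' _ => keyR z' u'
  -- P(U = u ∩ A1)
  have hsetU : ∀ z' : 𝒵, ({ω | U ω = u} ∩ A1) ∩ Z ⁻¹' {z'} = A1 ∩ ZU ⁻¹' {(z', u)} := by
    intro z'
    ext ω
    simp only [Set.mem_inter_iff, Set.mem_preimage, Set.mem_singleton_iff, Set.mem_setOf_eq,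
      hZUdef, Prod.mk.injEq]
    tauto
  have hPUA : (P ({ω | U ω = u} ∩ A1)).toReal = (b u * q u) * F := by
    rw [prob_decomp_aux P Z hZ ({ω | U ω = u} ∩ A1) ((hU (measurableSet_singleton u)).inter hA1m),
      ENNReal.toReal_sum (fun c _ => measure_ne_top P _)]
    rw [hFdef, Finset.mul_sum]
    refine Finset.sum_congr rfl fun z' _ => ?_
    rw [hsetU z', keyR z' u]; ring
  -- P(Z = z ∩ A1)
  have hsetZ : ∀ u' : 𝒰, ({ω | Z ω = z} ∩ A1) ∩ U ⁻¹' {u'} = A1 ∩ ZU ⁻¹' {(z, u')} := by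
    intro u'
    ext ω
    simp only [Set.mem_inter_iff, Set.mem_preimage, Set.mem_singleton_iff, Set.mem_setOf_eq,
      hZUdef, Prod.mk.injEq]
    tauto
  have hPZA : (P ({ω | Z ω = z} ∩ A1)).toReal = (a z * p z) * G := by
    rw [prob_decomp_aux P U hU ({ω | Z ω = z} ∩ A1) ((hZ (measurableSet_singleton z)).inter hA1m),
      ENNReal.toReal_sum (fun c _ => measure_ne_top P _)]
    rw [hGdef, Finset.mul_sum]
    refine Finset.sum_congr rfl fun u' _ => ?_
    rw [hsetZ u', keyR z u']
  -- P(U = u ∩ Z = z ∩ A1)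
  have hsetUZ : ({ω | U ω = u} ∩ {ω | Z ω = z}) ∩ A1 = A1 ∩ ZU ⁻¹' {(z, u)} := by
    ext ω
    simp only [Set.mem_inter_iff, Set.mem_preimage, Set.mem_singleton_iff, Set.mem_setOf_eq,
      hZUdef, Prod.mk.injEq]
    tauto
  have hPUZA : (P (({ω | U ω = u} ∩ {ω | Z ω = z}) ∩ A1)).toReal
      = (a z * p z) * (b u * q u) := by
    rw [hsetUZ, keyR z u]
  -- final arithmetic
  have hApos' : (0 : ℝ) < F * G := by
    rw [← hPA]; exact hApos
  have hF : F ≠ 0 := by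
    rcases mul_ne_zero_iff.1 (ne_of_gt hApos') with ⟨h1, h2⟩
    exact h1
  have hG : G ≠ 0 := by
    rcases mul_ne_zero_iff.1 (ne_of_gt hApos') with ⟨h1, h2⟩
    exact h2
  simp only [cprb, prb]
  rw [hPUZA, hPUA, hPZA, hPA]
  field_simp
end

section
/- (Theorem 2, part 1, finite-sample-space version: pathwise differentiability with canonical gradient EIF.) Let 𝒮 = 𝒴×{0,1}×{0,1}×𝒳 be a finite sample space (𝒴⊂ℝ finite) and let {f_v}_{v∈(−ε,ε)} be a family of strictly positive probability mass functions on 𝒮 such that v↦f_v(o) is differentiable at v=0 for each o∈𝒮, with f := f_0 the true law and score S(o) := (∂_v f_v(o)|_{v=0})/f(o). Write O=(Y,A,Z,X) for the coordinates, and for each v define the plug-in nuisances e_{z,v}, e_{1z,v}, p_{z,v}, π_{z,v}, ρ_v, φ_v, δ*_v, w_v under f_v by the stated formulas, and δ*_{m,v} := E_v[δ*_v(X)|A=1]. Assume that under f, p_1(x)≠p_0(x), 0<p_z(x)<1 and 0<π_z(x)<1 for all z∈{0,1}, x∈𝒳, and P_f(A=1)>0. Then v↦δ*_{m,v} is differentiable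 at v=0 and (d/dv)δ*_{m,v}|_{v=0} = E_f[EIF(O)·S(O)], where EIF(O) = (1/P_f(A=1))·{A(δ*(X) − δ*_m) + θ(O)} and θ(O) = [ρ(X)/(p_1(X)−p_0(X))]·[(2Z−1)/π_Z(X)]·{Y−Aδ*(X)−Zφ(X)−w(X)−(A/p_Z(X))·(Y−Zφ(X)−e_{10}(X))}. -/
open MeasureTheory

section FiniteSampleSpace

variable {𝒴 𝒳 : Type*} [Fintype 𝒴] [Fintype 𝒳]

/-- Probability of an event under a pmf `g` on the finite sample space
`𝒴 × {0,1} × {0,1} × 𝒳` with coordinates `O = (Y, A, Z, X)`. -/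
noncomputable def prS (g : 𝒴 × Bool × Bool × 𝒳 → ℝ)
    (s : Set (𝒴 × Bool × Bool × 𝒳)) : ℝ :=
  ∑ o, s.indicator g o

/-- Conditional expectation of `V` given the event `s`, under the pmf `g`. -/
noncomputable def expS (g V : 𝒴 × Bool × Bool × 𝒳 → ℝ)
    (s : Set (𝒴 × Bool × Bool × 𝒳)) : ℝ :=
  (∑ o, s.indicator (fun o' => V o' * g o') o) / prS g s

/-- `p_z(x) = P_g(A = 1 | Z = z, X = x)`. -/
noncomputable def pzS (g : 𝒴 × Bool × Bool × 𝒳 → ℝ) (z : Bool) (x : 𝒳) : ℝ :=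
  prS g {o | o.2.1 = true ∧ o.2.2.1 = z ∧ o.2.2.2 = x}
    / prS g {o | o.2.2.1 = z ∧ o.2.2.2 = x}

/-- `π_z(x) = P_g(Z = z | X = x)`. -/
noncomputable def pizS (g : 𝒴 × Bool × Bool × 𝒳 → ℝ) (z : Bool) (x : 𝒳) : ℝ :=
  prS g {o | o.2.2.1 = z ∧ o.2.2.2 = x} / prS g {o | o.2.2.2 = x}

/-- `ρ(x) = P_g(A = 1 | X = x)`. -/
noncomputable def rhoS (g : 𝒴 × Bool × Bool × 𝒳 → ℝ) (x : 𝒳) : ℝ :=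
  prS g {o | o.2.1 = true ∧ o.2.2.2 = x} / prS g {o | o.2.2.2 = x}

/-- `e_z(x) = E_g[Y | Z = z, X = x]`. -/
noncomputable def ezS (yval : 𝒴 → ℝ) (g : 𝒴 × Bool × Bool × 𝒳 → ℝ)
    (z : Bool) (x : 𝒳) : ℝ :=
  expS g (fun o => yval o.1) {o | o.2.2.1 = z ∧ o.2.2.2 = x}

/-- `e_{az}(x) = E_g[Y | A = a, Z = z, X = x]`. -/
noncomputable def eazS (yval : 𝒴 → ℝ) (g : 𝒴 × Bool × Bool × 𝒳 → ℝ)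
    (a z : Bool) (x : 𝒳) : ℝ :=
  expS g (fun o => yval o.1) {o | o.2.1 = a ∧ o.2.2.1 = z ∧ o.2.2.2 = x}

/-- `φ(x) = e₁₁(x) − e₁₀(x)`. -/
noncomputable def phiS (yval : 𝒴 → ℝ) (g : 𝒴 × Bool × Bool × 𝒳 → ℝ) (x : 𝒳) : ℝ :=
  eazS yval g true true x - eazS yval g true false x

/-- `δ*(x) = δ(x) − φ(x)/(p₁(x) − p₀(x))`. -/
noncomputable def deltaStarS (yval : 𝒴 → ℝ) (g : 𝒴 × Bool × Bool × 𝒳 → ℝ) (x : 𝒳) : ℝ :=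
  (ezS yval g true x - ezS yval g false x) / (pzS g true x - pzS g false x)
    - phiS yval g x / (pzS g true x - pzS g false x)

/-- `w(x) = E_g[Y − Aδ*(X) − Zφ(X) | X = x]`. -/
noncomputable def wS (yval : 𝒴 → ℝ) (g : 𝒴 × Bool × Bool × 𝒳 → ℝ) (x : 𝒳) : ℝ :=
  expS g (fun o => yval o.1 - b2r o.2.1 * deltaStarS yval g o.2.2.2
      - b2r o.2.2.1 * phiS yval g o.2.2.2)
    {o | o.2.2.2 = x}

/-- `δ*_m = E_g[δ*(X) | A = 1]`. -/
noncomputable def deltaMS (yval : 𝒴 → ℝ) (g : 𝒴 × Bool × Bool × 𝒳 → ℝ) : ℝ :=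
  expS g (fun o => deltaStarS yval g o.2.2.2) {o | o.2.1 = true}

/-- The correction term `θ(O)` of the efficient influence function. -/
noncomputable def thetaS (yval : 𝒴 → ℝ) (g : 𝒴 × Bool × Bool × 𝒳 → ℝ)
    (o : 𝒴 × Bool × Bool × 𝒳) : ℝ :=
  rhoS g o.2.2.2 / (pzS g true o.2.2.2 - pzS g false o.2.2.2)
    * ((2 * b2r o.2.2.1 - 1) / pizS g o.2.2.1 o.2.2.2)
    * (yval o.1 - b2r o.2.1 * deltaStarS yval g o.2.2.2
        - b2r o.2.2.1 * phiS yval g o.2.2.2 - wS yval g o.2.2.2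
        - b2r o.2.1 / pzS g o.2.2.1 o.2.2.2
          * (yval o.1 - b2r o.2.2.1 * phiS yval g o.2.2.2
              - eazS yval g true false o.2.2.2))

/-- The efficient influence function `EIF(O)`. -/
noncomputable def eifS (yval : 𝒴 → ℝ) (g : 𝒴 × Bool × Bool × 𝒳 → ℝ)
    (o : 𝒴 × Bool × Bool × 𝒳) : ℝ :=
  (1 / prS g {o' | o'.2.1 = true})
    * (b2r o.2.1 * (deltaStarS yval g o.2.2.2 - deltaMS yval g) + thetaS yval g o)

end FiniteSampleSpace


section AuxEIF
variable {𝒴 𝒳 : Type*} [Fintype 𝒴] [Fintype 𝒳]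

lemma prS_pos (g : 𝒴 × Bool × Bool × 𝒳 → ℝ) (hg : ∀ o, 0 < g o)
    (s : Set (𝒴 × Bool × Bool × 𝒳)) (hs : s.Nonempty) : 0 < prS g s := by
  classical
  obtain ⟨o₀, ho₀⟩ := hs
  refine Finset.sum_pos' (fun o _ => Set.indicator_nonneg (fun o' _ => (hg o').le) o)
    ⟨o₀, Finset.mem_univ _, ?_⟩
  rw [Set.indicator_of_mem ho₀]; exact hg o₀

lemma sumIndX (W : 𝒴 × Bool × Bool × 𝒳 → ℝ) (x : 𝒳) :
    ∑ o, ({o : 𝒴 × Bool × Bool × 𝒳 | o.2.2.2 = x}).indicator W o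
      = ((∑ y, W (y,true,true,x)) + ∑ y, W (y,false,true,x))
        + ((∑ y, W (y,true,false,x)) + ∑ y, W (y,false,false,x)) := by
  classical
  rw [Fintype.sum_prod_type, ← Finset.sum_add_distrib, ← Finset.sum_add_distrib,
    ← Finset.sum_add_distrib]
  refine Finset.sum_congr rfl fun y _ => ?_
  simp [Set.indicator_apply, Fintype.sum_prod_type, Fintype.sum_bool, Finset.sum_ite_eq']
  ring

lemma sumIndZX (W : 𝒴 × Bool × Bool × 𝒳 → ℝ) (z : Bool) (x : 𝒳) :
    ∑ o, ({o : 𝒴 × Bool × Bool × 𝒳 | o.2.2.1 = z ∧ o.2.2.2 = x}).indicator W o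
      = (∑ y, W (y,true,z,x)) + ∑ y, W (y,false,z,x) := by
  classical
  rw [Fintype.sum_prod_type, ← Finset.sum_add_distrib]
  refine Finset.sum_congr rfl fun y _ => ?_
  cases z <;>
    simp [Set.indicator_apply, Fintype.sum_prod_type, Fintype.sum_bool, Finset.sum_ite_eq']

lemma sumIndAZX (W : 𝒴 × Bool × Bool × 𝒳 → ℝ) (z : Bool) (x : 𝒳) :
    ∑ o, ({o : 𝒴 × Bool × Bool × 𝒳 | o.2.1 = true ∧ o.2.2.1 = z ∧ o.2.2.2 = x}).indicator W o
      = ∑ y, W (y,true,z,x) := by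
  classical
  rw [Fintype.sum_prod_type]
  refine Finset.sum_congr rfl fun y _ => ?_
  cases z <;>
    simp [Set.indicator_apply, Fintype.sum_prod_type, Fintype.sum_bool, Finset.sum_ite_eq']

lemma sumIndAX (W : 𝒴 × Bool × Bool × 𝒳 → ℝ) (x : 𝒳) :
    ∑ o, ({o : 𝒴 × Bool × Bool × 𝒳 | o.2.1 = true ∧ o.2.2.2 = x}).indicator W o
      = (∑ y, W (y,true,true,x)) + ∑ y, W (y,true,false,x) := by
  classical
  rw [Fintype.sum_prod_type, ← Finset.sum_add_distrib]
  refine Finset.sum_congr rfl fun y _ => ?_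
  simp [Set.indicator_apply, Fintype.sum_prod_type, Fintype.sum_bool, Finset.sum_ite_eq']

lemma sumIndA (W : 𝒴 × Bool × Bool × 𝒳 → ℝ) :
    ∑ o, ({o : 𝒴 × Bool × Bool × 𝒳 | o.2.1 = true}).indicator W o
      = ∑ x, ((∑ y, W (y,true,true,x)) + ∑ y, W (y,true,false,x)) := by
  classical
  have h : ∀ y : 𝒴, (∑ q : Bool × Bool × 𝒳,
      ({o : 𝒴 × Bool × Bool × 𝒳 | o.2.1 = true}).indicator W (y, q))
      = ∑ x, (W (y,true,true,x) + W (y,true,false,x)) := fun y => by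
    simp [Set.indicator_apply, Fintype.sum_prod_type, Fintype.sum_bool,
      Finset.sum_add_distrib]
  rw [Fintype.sum_prod_type, Finset.sum_congr rfl (fun y _ => h y), Finset.sum_comm]
  exact Finset.sum_congr rfl fun x _ => Finset.sum_add_distrib

lemma sum_partitionX (W : 𝒴 × Bool × Bool × 𝒳 → ℝ) :
    ∑ o, W o = ∑ x, ∑ o, ({o : 𝒴 × Bool × Bool × 𝒳 | o.2.2.2 = x}).indicator W o := by
  classical
  refine Eq.symm ?_
  rw [Finset.sum_comm]
  refine Finset.sum_congr rfl fun o _ => ?_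
  simp [Set.indicator_apply, Finset.sum_ite_eq]

lemma affine_sum (yval : 𝒴 → ℝ) (u t : 𝒴 → ℝ) (K L : ℝ)
    (ht : ∀ y, t y = K * yval y + L) :
    ∑ y, t y * u y = K * (∑ y, yval y * u y) + L * ∑ y, u y := by
  rw [Finset.sum_congr rfl (fun y _ => show t y * u y = K * (yval y * u y) + L * u y by
    rw [ht]; ring), Finset.sum_add_distrib, ← Finset.mul_sum, ← Finset.mul_sum]

lemma hasDerivAt_sumInd (f : ℝ → 𝒴 × Bool × Bool × 𝒳 → ℝ) (f' : 𝒴 × Bool × Bool × 𝒳 → ℝ)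
    (hderiv : ∀ o, HasDerivAt (fun v => f v o) (f' o) 0)
    (W : 𝒴 × Bool × Bool × 𝒳 → ℝ) (s : Set (𝒴 × Bool × Bool × 𝒳)) :
    HasDerivAt (fun v => ∑ o, s.indicator (fun o' => W o' * f v o') o)
      (∑ o, s.indicator (fun o' => W o' * f' o') o) 0 := by
  classical
  refine HasDerivAt.fun_sum fun o _ => ?_
  by_cases ho : o ∈ s
  · simp only [Set.indicator_of_mem ho]; exact (hderiv o).const_mul (W o)
  · simp only [Set.indicator_of_notMem ho]; exact hasDerivAt_const 0 0

lemma hasDerivAt_prS (f : ℝ → 𝒴 × Bool × Bool × 𝒳 → ℝ) (f' : 𝒴 × Bool × Bool × 𝒳 → ℝ)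
    (hderiv : ∀ o, HasDerivAt (fun v => f v o) (f' o) 0) (s : Set (𝒴 × Bool × Bool × 𝒳)) :
    HasDerivAt (fun v => prS (f v) s) (prS f' s) 0 := by
  classical
  unfold prS
  refine HasDerivAt.fun_sum fun o _ => ?_
  by_cases ho : o ∈ s
  · simp only [Set.indicator_of_mem ho]; exact hderiv o
  · simp only [Set.indicator_of_notMem ho]; exact hasDerivAt_const 0 0

/-- numerator of `expS` with weight `yval`. -/
noncomputable def numYS (yval : 𝒴 → ℝ) (g : 𝒴 × Bool × Bool × 𝒳 → ℝ)
    (s : Set (𝒴 × Bool × Bool × 𝒳)) : ℝ :=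
  ∑ o, s.indicator (fun o' => yval o'.1 * g o') o

noncomputable def pzD (F F' : 𝒴 × Bool × Bool × 𝒳 → ℝ) (z : Bool) (x : 𝒳) : ℝ :=
  (prS F' {o | o.2.1 = true ∧ o.2.2.1 = z ∧ o.2.2.2 = x}
      * prS F {o | o.2.2.1 = z ∧ o.2.2.2 = x}
    - prS F {o | o.2.1 = true ∧ o.2.2.1 = z ∧ o.2.2.2 = x}
      * prS F' {o | o.2.2.1 = z ∧ o.2.2.2 = x})
  / prS F {o | o.2.2.1 = z ∧ o.2.2.2 = x} ^ 2

noncomputable def ezD (yval : 𝒴 → ℝ) (F F' : 𝒴 × Bool × Bool × 𝒳 → ℝ) (z : Bool) (x : 𝒳) : ℝ :=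
  (numYS yval F' {o | o.2.2.1 = z ∧ o.2.2.2 = x} * prS F {o | o.2.2.1 = z ∧ o.2.2.2 = x}
    - numYS yval F {o | o.2.2.1 = z ∧ o.2.2.2 = x} * prS F' {o | o.2.2.1 = z ∧ o.2.2.2 = x})
  / prS F {o | o.2.2.1 = z ∧ o.2.2.2 = x} ^ 2

noncomputable def eazD (yval : 𝒴 → ℝ) (F F' : 𝒴 × Bool × Bool × 𝒳 → ℝ) (z : Bool) (x : 𝒳) : ℝ :=
  (numYS yval F' {o | o.2.1 = true ∧ o.2.2.1 = z ∧ o.2.2.2 = x}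
      * prS F {o | o.2.1 = true ∧ o.2.2.1 = z ∧ o.2.2.2 = x}
    - numYS yval F {o | o.2.1 = true ∧ o.2.2.1 = z ∧ o.2.2.2 = x}
      * prS F' {o | o.2.1 = true ∧ o.2.2.1 = z ∧ o.2.2.2 = x})
  / prS F {o | o.2.1 = true ∧ o.2.2.1 = z ∧ o.2.2.2 = x} ^ 2

noncomputable def dStarD (yval : 𝒴 → ℝ) (F F' : 𝒴 × Bool × Bool × 𝒳 → ℝ) (x : 𝒳) : ℝ :=
  ((ezD yval F F' true x - ezD yval F F' false x) * (pzS F true x - pzS F false x)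
      - (ezS yval F true x - ezS yval F false x) * (pzD F F' true x - pzD F F' false x))
    / (pzS F true x - pzS F false x) ^ 2
  - ((eazD yval F F' true x - eazD yval F F' false x) * (pzS F true x - pzS F false x)
      - phiS yval F x * (pzD F F' true x - pzD F F' false x))
    / (pzS F true x - pzS F false x) ^ 2

lemma hasDerivAt_dStar (yval : 𝒴 → ℝ) (f : ℝ → 𝒴 × Bool × Bool × 𝒳 → ℝ)
    (f' : 𝒴 × Bool × Bool × 𝒳 → ℝ)
    (hderiv : ∀ o, HasDerivAt (fun v => f v o) (f' o) 0) (x : 𝒳)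
    (hZT : prS (f 0) {o | o.2.2.1 = true ∧ o.2.2.2 = x} ≠ 0)
    (hZF : prS (f 0) {o | o.2.2.1 = false ∧ o.2.2.2 = x} ≠ 0)
    (hAZT : prS (f 0) {o | o.2.1 = true ∧ o.2.2.1 = true ∧ o.2.2.2 = x} ≠ 0)
    (hAZF : prS (f 0) {o | o.2.1 = true ∧ o.2.2.1 = false ∧ o.2.2.2 = x} ≠ 0)
    (hrel : pzS (f 0) true x - pzS (f 0) false x ≠ 0) :
    HasDerivAt (fun v => deltaStarS yval (f v) x) (dStarD yval (f 0) f' x) 0 := by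
  have hpz : ∀ z, HasDerivAt (fun v => pzS (f v) z x) (pzD (f 0) f' z x) 0 := by
    intro z
    simp only [pzS]
    refine HasDerivAt.div (hasDerivAt_prS f f' hderiv _) (hasDerivAt_prS f f' hderiv _) ?_
    cases z
    · exact hZF
    · exact hZT
  have hez : ∀ z, HasDerivAt (fun v => ezS yval (f v) z x) (ezD yval (f 0) f' z x) 0 := by
    intro z
    simp only [ezS, expS]
    refine HasDerivAt.div (hasDerivAt_sumInd f f' hderiv _ _) (hasDerivAt_prS f f' hderiv _) ?_
    cases z
    · exact hZF
    · exact hZT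
  have heaz : ∀ z, HasDerivAt (fun v => eazS yval (f v) true z x) (eazD yval (f 0) f' z x) 0 := by
    intro z
    simp only [eazS, expS]
    refine HasDerivAt.div (hasDerivAt_sumInd f f' hderiv _ _) (hasDerivAt_prS f f' hderiv _) ?_
    cases z
    · exact hAZF
    · exact hAZT
  have hphi : HasDerivAt (fun v => phiS yval (f v) x)
      (eazD yval (f 0) f' true x - eazD yval (f 0) f' false x) 0 := by
    simp only [phiS]; exact (heaz true).sub (heaz false)
  simp only [deltaStarS]
  exact (((hez true).sub (hez false)).div ((hpz true).sub (hpz false)) hrel).sub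
    (hphi.div ((hpz true).sub (hpz false)) hrel)

end AuxEIF

section PerX
variable {𝒴 𝒳 : Type*} [Fintype 𝒴] [Fintype 𝒳]

set_option maxHeartbeats 2000000 in
lemma perX (yval : 𝒴 → ℝ) [Nonempty 𝒴] (F F' : 𝒴 × Bool × Bool × 𝒳 → ℝ)
    (hF : ∀ o, 0 < F o) (x : 𝒳)
    (hrel : pzS F true x ≠ pzS F false x) :
    ∑ o, ({o : 𝒴 × Bool × Bool × 𝒳 | o.2.2.2 = x}).indicator
        (fun o' => thetaS yval F o' * F' o') o
      = dStarD yval F F' x * prS F {o | o.2.1 = true ∧ o.2.2.2 = x} := by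
  classical
  -- nonzeroness of basic moments
  have hm1 : (0:ℝ) < ∑ y, F (y,true,true,x) := Finset.sum_pos (fun _ _ => hF _) Finset.univ_nonempty
  have hm0 : (0:ℝ) < ∑ y, F (y,true,false,x) := Finset.sum_pos (fun _ _ => hF _) Finset.univ_nonempty
  have hr1 : (0:ℝ) < ∑ y, F (y,false,true,x) := Finset.sum_pos (fun _ _ => hF _) Finset.univ_nonempty
  have hr0 : (0:ℝ) < ∑ y, F (y,false,false,x) := Finset.sum_pos (fun _ _ => hF _) Finset.univ_nonempty
  have hn1 : (0:ℝ) < (∑ y, F (y,true,true,x)) + ∑ y, F (y,false,true,x) := by linarith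
  have hn0 : (0:ℝ) < (∑ y, F (y,true,false,x)) + ∑ y, F (y,false,false,x) := by linarith
  have hN : (0:ℝ) < ((∑ y, F (y,true,true,x)) + ∑ y, F (y,false,true,x))
      + ((∑ y, F (y,true,false,x)) + ∑ y, F (y,false,false,x)) := by linarith
  have hm1' : (∑ y, F (y,true,true,x)) ≠ 0 := hm1.ne'
  have hm0' : (∑ y, F (y,true,false,x)) ≠ 0 := hm0.ne'
  have hn1' : (∑ y, F (y,true,true,x)) + (∑ y, F (y,false,true,x)) ≠ 0 := hn1.ne'
  have hn0' : (∑ y, F (y,true,false,x)) + (∑ y, F (y,false,false,x)) ≠ 0 := hn0.ne'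
  have hN' : ((∑ y, F (y,true,true,x)) + ∑ y, F (y,false,true,x))
      + ((∑ y, F (y,true,false,x)) + ∑ y, F (y,false,false,x)) ≠ 0 := hN.ne'
  have hdne : pzS F true x - pzS F false x ≠ 0 := sub_ne_zero.mpr hrel
  -- pz, ez, eaz, phi in moment form
  have hpz' : ∀ z, pzS F z x
      = (∑ y, F (y,true,z,x)) / ((∑ y, F (y,true,z,x)) + ∑ y, F (y,false,z,x)) := fun z => by
    simp only [pzS, prS, sumIndZX, sumIndAZX]
  have hez' : ∀ z, ezS yval F z x
      = ((∑ y, yval y * F (y,true,z,x)) + ∑ y, yval y * F (y,false,z,x))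
        / ((∑ y, F (y,true,z,x)) + ∑ y, F (y,false,z,x)) := fun z => by
    simp only [ezS, expS, prS, sumIndZX, sumIndAZX]
  have heaz' : ∀ z, eazS yval F true z x
      = (∑ y, yval y * F (y,true,z,x)) / (∑ y, F (y,true,z,x)) := fun z => by
    simp only [eazS, expS, prS, sumIndAZX]
  have hphi' : phiS yval F x
      = (∑ y, yval y * F (y,true,true,x)) / (∑ y, F (y,true,true,x))
        - (∑ y, yval y * F (y,true,false,x)) / (∑ y, F (y,true,false,x)) := by
    simp only [phiS, heaz']
  have hrel2 : (∑ y, F (y,true,true,x)) * ((∑ y, F (y,true,false,x)) + ∑ y, F (y,false,false,x))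
      - ((∑ y, F (y,true,true,x)) + ∑ y, F (y,false,true,x)) * (∑ y, F (y,true,false,x)) ≠ 0 := by
    have h := hdne
    rw [hpz' true, hpz' false, div_sub_div _ _ hn1' hn0'] at h
    exact fun hc => h (by rw [hc, zero_div])
  -- closed form for w (keeping deltaStar and phi as atoms)
  have hw : wS yval F x
      = ((((∑ y, yval y * F (y,true,true,x)) + ∑ y, yval y * F (y,false,true,x))
          + ((∑ y, yval y * F (y,true,false,x)) + ∑ y, yval y * F (y,false,false,x)))
        - deltaStarS yval F x * ((∑ y, F (y,true,true,x)) + ∑ y, F (y,true,false,x))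
        - phiS yval F x * ((∑ y, F (y,true,true,x)) + ∑ y, F (y,false,true,x)))
        / (((∑ y, F (y,true,true,x)) + ∑ y, F (y,false,true,x))
          + ((∑ y, F (y,true,false,x)) + ∑ y, F (y,false,false,x))) := by
    simp only [wS, expS, prS, sumIndX, b2r, if_true, Bool.false_eq_true, if_false,
      one_mul, zero_mul, sub_zero]
    congr 1
    simp only [sub_mul, Finset.sum_sub_distrib, ← Finset.mul_sum]
    ring
  -- the defining identities (a) and (b)
  have hb : wS yval F x = ezS yval F false x - deltaStarS yval F x * pzS F false x := by
    rw [hw, deltaStarS, hez' true, hez' false, hphi', hpz' true, hpz' false,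
      div_sub_div _ _ hn1' hn0']
    generalize (∑ y, F (y,true,true,x)) = M1 at hrel2 hn1' hm1' hN' ⊢
    generalize (∑ y, F (y,true,false,x)) = M0 at hrel2 hn0' hm0' hN' ⊢
    generalize (∑ y, F (y,false,true,x)) = R1 at hrel2 hn1' hN' ⊢
    generalize (∑ y, F (y,false,false,x)) = R0 at hrel2 hn0' hN' ⊢
    generalize (∑ y, yval y * F (y,true,true,x)) = T1
    generalize (∑ y, yval y * F (y,true,false,x)) = T0
    generalize (∑ y, yval y * F (y,false,true,x)) = U1
    generalize (∑ y, yval y * F (y,false,false,x)) = U0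
    have h3 : R0 * M1 - M0 * R1 ≠ 0 := by intro h; apply hrel2; linear_combination h
    have h4 : M1 * R0 - R1 * M0 ≠ 0 := by intro h; apply hrel2; linear_combination h
    have h5 : M1 * R0 - M0 * R1 ≠ 0 := by intro h; apply hrel2; linear_combination h
    have h6 : R0 * M1 - R1 * M0 ≠ 0 := by intro h; apply hrel2; linear_combination h
    have h7 : (M0 + R0) * M1 - M0 * (M1 + R1) ≠ 0 := by intro h; apply hrel2; linear_combination h
    field_simp
    field_simp
    ring
  have ha : phiS yval F x + wS yval F x
      = ezS yval F true x - deltaStarS yval F x * pzS F true x := by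
    rw [hw, deltaStarS, hez' true, hez' false, hphi', hpz' true, hpz' false,
      div_sub_div _ _ hn1' hn0']
    generalize (∑ y, F (y,true,true,x)) = M1 at hrel2 hn1' hm1' hN' ⊢
    generalize (∑ y, F (y,true,false,x)) = M0 at hrel2 hn0' hm0' hN' ⊢
    generalize (∑ y, F (y,false,true,x)) = R1 at hrel2 hn1' hN' ⊢
    generalize (∑ y, F (y,false,false,x)) = R0 at hrel2 hn0' hN' ⊢
    generalize (∑ y, yval y * F (y,true,true,x)) = T1
    generalize (∑ y, yval y * F (y,true,false,x)) = T0
    generalize (∑ y, yval y * F (y,false,true,x)) = U1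
    generalize (∑ y, yval y * F (y,false,false,x)) = U0
    have h3 : R0 * M1 - M0 * R1 ≠ 0 := by intro h; apply hrel2; linear_combination h
    have h4 : M1 * R0 - R1 * M0 ≠ 0 := by intro h; apply hrel2; linear_combination h
    have h5 : M1 * R0 - M0 * R1 ≠ 0 := by intro h; apply hrel2; linear_combination h
    have h6 : R0 * M1 - R1 * M0 ≠ 0 := by intro h; apply hrel2; linear_combination h
    field_simp
    field_simp
    ring
  have hq : phiS yval F x + eazS yval F true false x = eazS yval F true true x := by
    simp only [phiS]; ring
  -- rho/pi cancellation
  have hc1 : rhoS F x / (pzS F true x - pzS F false x) * (1 / pizS F true x)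
      = ((∑ y, F (y,true,true,x)) + ∑ y, F (y,true,false,x))
        / ((∑ y, F (y,true,true,x)) + ∑ y, F (y,false,true,x))
        / (pzS F true x - pzS F false x) := by
    simp only [rhoS, pizS, prS, sumIndAX, sumIndZX, sumIndX]
    field_simp
  have hc0 : -(rhoS F x / (pzS F true x - pzS F false x)) * (1 / pizS F false x)
      = -(((∑ y, F (y,true,true,x)) + ∑ y, F (y,true,false,x))
        / ((∑ y, F (y,true,false,x)) + ∑ y, F (y,false,false,x))
        / (pzS F true x - pzS F false x)) := by
    simp only [rhoS, pizS, prS, sumIndAX, sumIndZX, sumIndX]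
    field_simp
  -- expand the indicator sum over {X = x}
  rw [sumIndX (fun o' => thetaS yval F o' * F' o') x]
  -- the four affine sums
  have e11 : ∑ y, thetaS yval F (y,true,true,x) * F' (y,true,true,x)
      = (rhoS F x / (pzS F true x - pzS F false x) * (1 / pizS F true x)
          * (1 - 1 / pzS F true x)) * (∑ y, yval y * F' (y,true,true,x))
        + (rhoS F x / (pzS F true x - pzS F false x) * (1 / pizS F true x)
          * (-(deltaStarS yval F x) - (phiS yval F x + wS yval F x)
              + (phiS yval F x + eazS yval F true false x) / pzS F true x))
          * ∑ y, F' (y,true,true,x) :=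
    affine_sum yval (fun y => F' (y,true,true,x)) (fun y => thetaS yval F (y,true,true,x)) _ _
      (fun y => by simp [thetaS, b2r]; ring)
  have e01 : ∑ y, thetaS yval F (y,false,true,x) * F' (y,false,true,x)
      = (rhoS F x / (pzS F true x - pzS F false x) * (1 / pizS F true x))
          * (∑ y, yval y * F' (y,false,true,x))
        + (rhoS F x / (pzS F true x - pzS F false x) * (1 / pizS F true x)
          * (-(phiS yval F x + wS yval F x))) * ∑ y, F' (y,false,true,x) :=
    affine_sum yval (fun y => F' (y,false,true,x)) (fun y => thetaS yval F (y,false,true,x)) _ _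
      (fun y => by simp [thetaS, b2r]; ring)
  have e10 : ∑ y, thetaS yval F (y,true,false,x) * F' (y,true,false,x)
      = (-(rhoS F x / (pzS F true x - pzS F false x)) * (1 / pizS F false x)
          * (1 - 1 / pzS F false x)) * (∑ y, yval y * F' (y,true,false,x))
        + (-(rhoS F x / (pzS F true x - pzS F false x)) * (1 / pizS F false x)
          * (-(deltaStarS yval F x) - wS yval F x
              + eazS yval F true false x / pzS F false x))
          * ∑ y, F' (y,true,false,x) :=
    affine_sum yval (fun y => F' (y,true,false,x)) (fun y => thetaS yval F (y,true,false,x)) _ _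
      (fun y => by simp [thetaS, b2r]; ring)
  have e00 : ∑ y, thetaS yval F (y,false,false,x) * F' (y,false,false,x)
      = (-(rhoS F x / (pzS F true x - pzS F false x)) * (1 / pizS F false x))
          * (∑ y, yval y * F' (y,false,false,x))
        + (-(rhoS F x / (pzS F true x - pzS F false x)) * (1 / pizS F false x)
          * (-(wS yval F x))) * ∑ y, F' (y,false,false,x) :=
    affine_sum yval (fun y => F' (y,false,false,x)) (fun y => thetaS yval F (y,false,false,x)) _ _
      (fun y => by simp [thetaS, b2r]; ring)
  rw [e11, e01, e10, e00, ha, hb, hq, hc1, hc0]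
  -- unfold the rest into moment sums, keeping pzS opaque
  simp only [dStarD, pzD, ezD, eazD, numYS, deltaStarS, ezS, eazS, phiS,
    expS, prS, sumIndX, sumIndZX, sumIndAZX, sumIndAX]
  generalize hdg : pzS F true x - pzS F false x = d at hdne ⊢
  rw [hpz' true, hpz' false]
  set n1 := (∑ y, F (y,true,true,x)) + ∑ y, F (y,false,true,x) with hsn1
  set n0 := (∑ y, F (y,true,false,x)) + ∑ y, F (y,false,false,x) with hsn0
  set s1 := (∑ y, yval y * F (y,true,true,x)) + ∑ y, yval y * F (y,false,true,x) with hss1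
  set s0 := (∑ y, yval y * F (y,true,false,x)) + ∑ y, yval y * F (y,false,false,x) with hss0
  set M1 := ∑ y, F (y,true,true,x) with hsM1
  set M0 := ∑ y, F (y,true,false,x) with hsM0
  set T1 := ∑ y, yval y * F (y,true,true,x) with hsT1
  set T0 := ∑ y, yval y * F (y,true,false,x) with hsT0
  set A1 := ∑ y, F' (y,true,true,x) with hsA1
  set A0 := ∑ y, F' (y,true,false,x) with hsA0
  set C1 := ∑ y, F' (y,false,true,x) with hsC1
  set C0 := ∑ y, F' (y,false,false,x) with hsC0
  set B1 := ∑ y, yval y * F' (y,true,true,x) with hsB1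
  set B0 := ∑ y, yval y * F' (y,true,false,x) with hsB0
  set D1 := ∑ y, yval y * F' (y,false,true,x) with hsD1
  set D0 := ∑ y, yval y * F' (y,false,false,x) with hsD0
  clear_value n1 n0 s1 s0 M1 M0 T1 T0 A1 A0 C1 C0 B1 B0 D1 D0
  field_simp
  ring
end PerX

section Rearr
variable {𝒴 𝒳 : Type*} [Fintype 𝒴] [Fintype 𝒳]

lemma rearrA (D : 𝒳 → ℝ) (g : 𝒴 × Bool × Bool × 𝒳 → ℝ) :
    ∑ o, ({o : 𝒴 × Bool × Bool × 𝒳 | o.2.1 = true}).indicator (fun o' => D o'.2.2.2 * g o') o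
      = ∑ x, D x * prS g {o | o.2.1 = true ∧ o.2.2.2 = x} := by
  rw [sumIndA]
  refine Finset.sum_congr rfl fun x _ => ?_
  simp only [prS, sumIndAX]
  rw [mul_add, Finset.mul_sum, Finset.mul_sum]
end Rearr

/-- Theorem 2, part 1, finite-sample-space version: the target
`v ↦ δ*_{m,v}` is pathwise differentiable at `v = 0` with canonical gradient the
efficient influence function: `(d/dv) δ*_{m,v}|₀ = E_f[EIF(O)·S(O)]`. -/
theorem pathwise_differentiability_EIF
    {𝒴 𝒳 : Type*} [Fintype 𝒴] [Fintype 𝒳]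
    (yval : 𝒴 → ℝ) (hyval : Function.Injective yval)
    (ε : ℝ) (hε : 0 < ε)
    -- a parametric family of strictly positive pmfs, differentiable at v = 0
    (f : ℝ → 𝒴 × Bool × Bool × 𝒳 → ℝ)
    (hpos : ∀ v, |v| < ε → ∀ o, 0 < f v o)
    (hsum : ∀ v, |v| < ε → ∑ o, f v o = 1)
    (f' : 𝒴 × Bool × Bool × 𝒳 → ℝ)
    (hderiv : ∀ o, HasDerivAt (fun v => f v o) (f' o) 0)
    -- regularity of the true law f = f 0
    (hrel : ∀ x, pzS (f 0) true x ≠ pzS (f 0) false x)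
    (hp : ∀ z x, 0 < pzS (f 0) z x ∧ pzS (f 0) z x < 1)
    (hpi : ∀ z x, 0 < pizS (f 0) z x ∧ pizS (f 0) z x < 1)
    (hA : 0 < prS (f 0) {o | o.2.1 = true}) :
    HasDerivAt (fun v => deltaMS yval (f v))
      (∑ o, eifS yval (f 0) o * (f' o / f 0 o) * f 0 o) 0 := by
  classical
  have hF0 : ∀ o, 0 < f 0 o := hpos 0 (by simpa using hε)
  have hSne : Nonempty (𝒴 × Bool × Bool × 𝒳) := by
    rcases isEmpty_or_nonempty (𝒴 × Bool × Bool × 𝒳) with h | h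
    · exfalso
      have h0 : prS (f 0) {o | o.2.1 = true} = 0 := by simp [prS]
      rw [h0] at hA
      exact lt_irrefl 0 hA
    · exact h
  obtain ⟨⟨y₀, a₀, z₀, x₀⟩⟩ := hSne
  haveI : Nonempty 𝒴 := ⟨y₀⟩
  have hZX : ∀ z xx, 0 < prS (f 0) {o | o.2.2.1 = z ∧ o.2.2.2 = xx} := fun z xx =>
    prS_pos _ hF0 _ ⟨(y₀, true, z, xx), ⟨rfl, rfl⟩⟩
  have hAZX : ∀ z xx, 0 < prS (f 0) {o | o.2.1 = true ∧ o.2.2.1 = z ∧ o.2.2.2 = xx} := fun z xx =>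
    prS_pos _ hF0 _ ⟨(y₀, true, z, xx), ⟨rfl, rfl, rfl⟩⟩
  have hdstar : ∀ xx, HasDerivAt (fun v => deltaStarS yval (f v) xx)
      (dStarD yval (f 0) f' xx) 0 := fun xx =>
    hasDerivAt_dStar yval f f' hderiv xx (hZX true xx).ne' (hZX false xx).ne'
      (hAZX true xx).ne' (hAZX false xx).ne' (sub_ne_zero.mpr (hrel xx))
  have hprs : ∀ s, HasDerivAt (fun v => prS (f v) s) (prS f' s) 0 := hasDerivAt_prS f f' hderiv
  have hnum : HasDerivAt
      (fun v => ∑ x, deltaStarS yval (f v) x * prS (f v) {o | o.2.1 = true ∧ o.2.2.2 = x})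
      (∑ x, (dStarD yval (f 0) f' x * prS (f 0) {o | o.2.1 = true ∧ o.2.2.2 = x}
        + deltaStarS yval (f 0) x * prS f' {o | o.2.1 = true ∧ o.2.2.2 = x})) 0 :=
    HasDerivAt.fun_sum fun x _ => (hdstar x).mul (hprs _)
  have hq := hnum.div (hprs {o | o.2.1 = true}) hA.ne'
  have hfun : (fun v => deltaMS yval (f v))
      = fun v => (∑ x, deltaStarS yval (f v) x * prS (f v) {o | o.2.1 = true ∧ o.2.2.2 = x})
          / prS (f v) {o | o.2.1 = true} := by
    funext v
    simp only [deltaMS, expS]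
    rw [rearrA]
  rw [hfun]
  refine hq.congr_deriv ?_
  symm
  -- now an equality of real numbers
  rw [Finset.sum_congr rfl (fun o (_ : o ∈ Finset.univ) =>
    show eifS yval (f 0) o * (f' o / f 0 o) * f 0 o = eifS yval (f 0) o * f' o by
      rw [mul_assoc, div_mul_cancel₀ _ (hF0 o).ne'])]
  have h2 : ∀ o ∈ Finset.univ, eifS yval (f 0) o * f' o
      = (1 / prS (f 0) {o' | o'.2.1 = true})
        * (({o' : 𝒴 × Bool × Bool × 𝒳 | o'.2.1 = true}).indicator
              (fun o' => deltaStarS yval (f 0) o'.2.2.2 * f' o') o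
          - deltaMS yval (f 0)
              * ({o' : 𝒴 × Bool × Bool × 𝒳 | o'.2.1 = true}).indicator f' o
          + thetaS yval (f 0) o * f' o) := by
    intro o _
    simp only [eifS]
    by_cases h : o ∈ {o' : 𝒴 × Bool × Bool × 𝒳 | o'.2.1 = true}
    · rw [Set.indicator_of_mem h, Set.indicator_of_mem h]
      have hb : o.2.1 = true := h
      rw [hb]
      simp only [b2r, if_true]
      ring
    · rw [Set.indicator_of_notMem h, Set.indicator_of_notMem h]
      have hb : o.2.1 = false := by
        have := h
        simp only [Set.mem_setOf_eq] at this
        exact Bool.not_eq_true _ ▸ (Bool.eq_false_iff.mpr this)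
      rw [hb]
      simp only [b2r, Bool.false_eq_true, if_false]
      ring
  rw [Finset.sum_congr rfl h2, ← Finset.mul_sum, Finset.sum_add_distrib,
    Finset.sum_sub_distrib, ← Finset.mul_sum, rearrA (deltaStarS yval (f 0)) f']
  have hindf : ∑ o, ({o' : 𝒴 × Bool × Bool × 𝒳 | o'.2.1 = true}).indicator f' o
      = prS f' {o | o.2.1 = true} := rfl
  rw [hindf]
  have hth : ∑ o, thetaS yval (f 0) o * f' o
      = ∑ x, dStarD yval (f 0) f' x * prS (f 0) {o | o.2.1 = true ∧ o.2.2.2 = x} := by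
    rw [sum_partitionX (fun o => thetaS yval (f 0) o * f' o)]
    exact Finset.sum_congr rfl fun x _ => perX yval (f 0) f' hF0 x (hrel x)
  rw [hth]
  have hdm : deltaMS yval (f 0)
      = (∑ x, deltaStarS yval (f 0) x * prS (f 0) {o | o.2.1 = true ∧ o.2.2.2 = x})
        / prS (f 0) {o | o.2.1 = true} := by
    simp only [deltaMS, expS]
    rw [rearrA]
  rw [hdm, Finset.sum_add_distrib]
  have hPA : prS (f 0) {o' | o'.2.1 = true} = prS (f 0) {o | o.2.1 = true} := rfl
  rw [hPA]
  set PA := prS (f 0) {o | o.2.1 = true} with hsPA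
  set PB := prS f' {o | o.2.1 = true} with hsPB
  set U := ∑ x, dStarD yval (f 0) f' x * prS (f 0) {o | o.2.1 = true ∧ o.2.2.2 = x} with hsU
  set V := ∑ x, deltaStarS yval (f 0) x * prS f' {o | o.2.1 = true ∧ o.2.2.2 = x} with hsV
  set W := ∑ x, deltaStarS yval (f 0) x * prS (f 0) {o | o.2.1 = true ∧ o.2.2.2 = x} with hsW
  have hPAne : PA ≠ 0 := hA.ne'
  field_simp
  ring
end
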